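/- arXiv:2404.13473 — 10 statements merged into one kernel-verified Lean document; each statement's English description precedes it below -/
import Mathlib

section
/- Let X, Y, T be metric spaces with X and T compact, and let f : X × T → Y be a continuous map such that for every t ∈ T the map x ↦ f(x,t) is injective on X, and such that for every x₀ ∈ X and every t₀ ∈ T there exist a neighborhood U of x₀ in X, a neighborhood I of t₀ in T, and a real number C₀ ≥ 1 such that for every t ∈ I the map x ↦ f(x,t) restricted to U is C₀-bi-Lipschitz. Then there exists a real number C ≥ 1 such that for every t ∈ T the map x ↦ f(x,t) is C-bi-Lipschitz on all of X. -/
/-- Lemma (uniform bi-Lipschitz family): if `f : X × T → Y` is continuous, each time-slice is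
injective, and near every `(x₀, t₀)` the time-slices are uniformly locally `C₀`-bi-Lipschitz,
then all time-slices are `C`-bi-Lipschitz for a common constant `C`. -/
theorem biLipschitz_family_of_locally_biLipschitz
    {X Y T : Type*} [MetricSpace X] [MetricSpace Y] [MetricSpace T]
    [CompactSpace X] [CompactSpace T]
    (f : X × T → Y) (hf : Continuous f)
    (hinj : ∀ t : T, Function.Injective fun x : X => f (x, t))
    (hloc : ∀ x₀ : X, ∀ t₀ : T, ∃ U ∈ nhds x₀, ∃ I ∈ nhds t₀, ∃ C₀ : ℝ, 1 ≤ C₀ ∧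
      ∀ t ∈ I, ∀ p ∈ U, ∀ q ∈ U,
        (1 / C₀) * dist p q ≤ dist (f (p, t)) (f (q, t)) ∧
          dist (f (p, t)) (f (q, t)) ≤ C₀ * dist p q) :
    ∃ C : ℝ, 1 ≤ C ∧ ∀ t : T, ∀ p q : X,
      (1 / C) * dist p q ≤ dist (f (p, t)) (f (q, t)) ∧
        dist (f (p, t)) (f (q, t)) ≤ C * dist p q := by
  rcases isEmpty_or_nonempty X with hX | hX
  · exact ⟨1, le_refl 1, fun t p q => (IsEmpty.false p).elim⟩
  rcases isEmpty_or_nonempty T with hT | hT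
  · exact ⟨1, le_refl 1, fun t => (IsEmpty.false t).elim⟩
  choose U hU I hI C hC1 hC2 using fun z : X × T => hloc z.1 z.2
  -- finite subcover
  have hcov : (Set.univ : Set (X × T)) ⊆
      ⋃ z : X × T, interior (U z) ×ˢ interior (I z) := by
    intro z _
    exact Set.mem_iUnion.2 ⟨z, Set.mk_mem_prod
      (mem_interior_iff_mem_nhds.2 (hU z)) (mem_interior_iff_mem_nhds.2 (hI z))⟩
  obtain ⟨s, hs⟩ := isCompact_univ.elim_finite_subcover
    (fun z : X × T => interior (U z) ×ˢ interior (I z))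
    (fun z => isOpen_interior.prod isOpen_interior) hcov
  have hsne : s.Nonempty := by
    rcases Set.mem_iUnion₂.1 (hs (Set.mem_univ (Classical.arbitrary (X × T)))) with ⟨z, hz, _⟩
    exact ⟨z, hz⟩
  -- Lebesgue number for the subcover indexed by the subtype of s
  have hs' : (Set.univ : Set (X × T)) ⊆
      ⋃ z : {z // z ∈ s}, interior (U z.1) ×ˢ interior (I z.1) := by
    intro x hx
    rcases Set.mem_iUnion₂.1 (hs hx) with ⟨z, hz, hmem⟩
    exact Set.mem_iUnion.2 ⟨⟨z, hz⟩, hmem⟩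
  obtain ⟨δ, hδ, hball⟩ := lebesgue_number_lemma_of_metric isCompact_univ
    (fun z : {z // z ∈ s} => isOpen_interior.prod isOpen_interior) hs'
  set Cmax : ℝ := s.sup' hsne C with hCmax_def
  have hCmax1 : 1 ≤ Cmax := by
    obtain ⟨z, hz⟩ := hsne
    exact le_trans (hC1 z) (Finset.le_sup' C hz)
  have hCmaxpos : 0 < Cmax := lt_of_lt_of_le one_pos hCmax1
  -- near estimate
  have near : ∀ (t : T) (p q : X), dist p q < δ →
      1 / Cmax * dist p q ≤ dist (f (p, t)) (f (q, t)) ∧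
        dist (f (p, t)) (f (q, t)) ≤ Cmax * dist p q := by
    intro t p q hpq
    obtain ⟨z, hz⟩ := hball (p, t) (Set.mem_univ _)
    have hp : (p, t) ∈ interior (U z.1) ×ˢ interior (I z.1) := hz (Metric.mem_ball_self hδ)
    have hq : (q, t) ∈ interior (U z.1) ×ˢ interior (I z.1) := by
      apply hz
      simp only [Metric.mem_ball, Prod.dist_eq, dist_self, max_lt_iff]
      exact ⟨by rwa [dist_comm], hδ⟩
    have hzC : C z.1 ≤ Cmax := Finset.le_sup' C z.2
    have hCz : 0 < C z.1 := lt_of_lt_of_le one_pos (hC1 z.1)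
    obtain ⟨h1, h2⟩ := hC2 z.1 t (interior_subset hp.2) p (interior_subset hp.1)
      q (interior_subset hq.1)
    constructor
    · refine le_trans (mul_le_mul_of_nonneg_right ?_ dist_nonneg) h1
      exact one_div_le_one_div_of_le hCz hzC
    · exact le_trans h2 (mul_le_mul_of_nonneg_right hzC dist_nonneg)
  by_cases hK : ∃ u : (X × X) × T, δ ≤ dist u.1.1 u.1.2
  · -- the "far" compact set is nonempty
    set K : Set ((X × X) × T) := {u | δ ≤ dist u.1.1 u.1.2} with hKdef
    have hKclosed : IsClosed K :=
      isClosed_le continuous_const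
        (continuous_dist.comp ((continuous_fst.comp continuous_fst).prodMk
          (continuous_snd.comp continuous_fst)))
    have hKcomp : IsCompact K := hKclosed.isCompact
    have hKne : K.Nonempty := hK
    set g : (X × X) × T → ℝ := fun u => dist (f (u.1.1, u.2)) (f (u.1.2, u.2)) with hgdef
    have hg : Continuous g :=
      Continuous.dist (hf.comp ((continuous_fst.comp continuous_fst).prodMk continuous_snd))
        (hf.comp ((continuous_snd.comp continuous_fst).prodMk continuous_snd))
    obtain ⟨u₀, hu₀K, hmin⟩ := hKcomp.exists_isMinOn hKne hg.continuousOn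
    set m : ℝ := g u₀ with hmdef
    have hm : 0 < m := by
      have hne : u₀.1.1 ≠ u₀.1.2 := by
        intro h
        have hd0 : δ ≤ dist u₀.1.1 u₀.1.2 := hu₀K
        rw [h, dist_self] at hd0
        exact absurd hd0 (not_le.2 hδ)
      refine dist_pos.2 fun h => hne (hinj u₀.2 ?_)
      exact h
    set DX : ℝ := Metric.diam (Set.univ : Set X) with hDXdef
    set D : ℝ := Metric.diam (Set.range f) with hDdef
    have hDXb : ∀ p q : X, dist p q ≤ DX := fun p q =>
      Metric.dist_le_diam_of_mem isCompact_univ.isBounded (Set.mem_univ p) (Set.mem_univ q)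
    have hDb : ∀ a b : X × T, dist (f a) (f b) ≤ D := fun a b =>
      Metric.dist_le_diam_of_mem (isCompact_range hf).isBounded ⟨a, rfl⟩ ⟨b, rfl⟩
    refine ⟨max Cmax (max (DX / m) (D / δ)), le_trans hCmax1 (le_max_left _ _), ?_⟩
    set Cfin : ℝ := max Cmax (max (DX / m) (D / δ)) with hCfin
    have hCfinpos : 0 < Cfin := lt_of_lt_of_le hCmaxpos (le_max_left _ _)
    intro t p q
    by_cases hd : dist p q < δ
    · obtain ⟨h1, h2⟩ := near t p q hd
      constructor
      · refine le_trans (mul_le_mul_of_nonneg_right ?_ dist_nonneg) h1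
        exact one_div_le_one_div_of_le hCmaxpos (le_max_left _ _)
      · exact le_trans h2 (mul_le_mul_of_nonneg_right (le_max_left _ _) dist_nonneg)
    · push_neg at hd
      have hmem : ((p, q), t) ∈ K := hd
      have hgm : m ≤ g ((p, q), t) := hmin hmem
      constructor
      · -- lower bound: (1/Cfin) * dist p q ≤ (1/Cfin) * DX ≤ m ≤ g
        have h1 : 1 / Cfin * dist p q ≤ 1 / Cfin * DX :=
          mul_le_mul_of_nonneg_left (hDXb p q) (by positivity)
        have hDX' : DX ≤ Cfin * m :=
          (div_le_iff₀ hm).1 (le_trans (le_max_left _ _) (le_max_right _ _))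
        have h2 : 1 / Cfin * DX ≤ m := by
          rw [one_div, inv_mul_le_iff₀ hCfinpos]
          exact hDX'
        exact le_trans h1 (le_trans h2 hgm)
      · -- upper bound: g ≤ D ≤ (D/δ)*δ ≤ Cfin * dist p q
        have h1 : dist (f (p, t)) (f (q, t)) ≤ D := hDb _ _
        have hDδ : D / δ ≤ Cfin := le_trans (le_max_right _ _) (le_max_right _ _)
        have h2 : D ≤ Cfin * δ := by
          calc D = D / δ * δ := by field_simp
            _ ≤ Cfin * δ := mul_le_mul_of_nonneg_right hDδ (le_of_lt hδ)
        have h3 : Cfin * δ ≤ Cfin * dist p q :=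
          mul_le_mul_of_nonneg_left hd (le_of_lt hCfinpos)
        exact le_trans h1 (le_trans h2 h3)
  · push_neg at hK
    exact ⟨Cmax, hCmax1, fun t p q => near t p q (hK ((p, q), t))⟩
end

section
/- Let X be a compact metric space, Y a metric space, and f : X → Y a continuous injective map such that every point x₀ ∈ X has a neighborhood U and a real number C₀ ≥ 1 (both possibly depending on x₀) such that the restriction of f to U is C₀-bi-Lipschitz. Then there exists a real number C ≥ 1 such that f is C-bi-Lipschitz on all of X. -/
/-- A continuous injective map of a compact metric space which is locally bi-Lipschitz
(with a constant depending on the point) is globally `C`-bi-Lipschitz for some `C ≥ 1`. -/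
theorem biLipschitz_of_locally_biLipschitz
    {X Y : Type*} [MetricSpace X] [MetricSpace Y] [CompactSpace X]
    (f : X → Y) (hf : Continuous f) (hinj : Function.Injective f)
    (hloc : ∀ x₀ : X, ∃ U ∈ nhds x₀, ∃ C₀ : ℝ, 1 ≤ C₀ ∧
      ∀ p ∈ U, ∀ q ∈ U,
        (1 / C₀) * dist p q ≤ dist (f p) (f q) ∧ dist (f p) (f q) ≤ C₀ * dist p q) :
    ∃ C : ℝ, 1 ≤ C ∧ ∀ p q : X,
      (1 / C) * dist p q ≤ dist (f p) (f q) ∧ dist (f p) (f q) ≤ C * dist p q := by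
  classical
  rcases isEmpty_or_nonempty X with hX | hX
  · exact ⟨1, le_refl 1, fun p => (IsEmpty.false p).elim⟩
  choose U hU C hC1 hCprop using hloc
  have hcover : (Set.univ : Set X) ⊆ ⋃ x, interior (U x) := fun p _ =>
    Set.mem_iUnion.2 ⟨p, mem_interior_iff_mem_nhds.2 (hU p)⟩
  obtain ⟨t, ht⟩ := isCompact_univ.elim_finite_subcover (fun x => interior (U x))
    (fun x => isOpen_interior) hcover
  have htne : t.Nonempty := by
    obtain ⟨p⟩ := hX
    rcases Set.mem_iUnion₂.1 (ht (Set.mem_univ p)) with ⟨x, hx, _⟩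
    exact ⟨x, hx⟩
  obtain ⟨δ, hδ, hLeb⟩ := lebesgue_number_lemma_of_metric isCompact_univ
    (c := fun x : t => interior (U x)) (fun _ => isOpen_interior)
    (by intro p _
        rcases Set.mem_iUnion₂.1 (ht (Set.mem_univ p)) with ⟨x, hx, hpx⟩
        exact Set.mem_iUnion.2 ⟨⟨x, hx⟩, hpx⟩)
  set C₁ : ℝ := t.sup' htne C with hC₁def
  have hC₁ : 1 ≤ C₁ := by
    obtain ⟨x, hx⟩ := htne
    exact le_trans (hC1 x) (Finset.le_sup' C hx)
  have hC₁pos : 0 < C₁ := lt_of_lt_of_le one_pos hC₁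
  -- near pairs
  have hnear : ∀ p q : X, dist p q < δ →
      (1 / C₁) * dist p q ≤ dist (f p) (f q) ∧ dist (f p) (f q) ≤ C₁ * dist p q := by
    intro p q hpq
    obtain ⟨⟨x, hx⟩, hball⟩ := hLeb p (Set.mem_univ p)
    have hp : p ∈ U x := interior_subset (hball (Metric.mem_ball_self hδ))
    have hq : q ∈ U x := interior_subset (hball (by simpa [Metric.mem_ball, dist_comm] using hpq))
    obtain ⟨h1, h2⟩ := hCprop x p hp q hq
    have hCx : C x ≤ C₁ := Finset.le_sup' C hx
    have hCxpos : 0 < C x := lt_of_lt_of_le one_pos (hC1 x)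
    constructor
    · refine le_trans ?_ h1
      apply mul_le_mul_of_nonneg_right _ dist_nonneg
      exact one_div_le_one_div_of_le hCxpos hCx
    · exact le_trans h2 (mul_le_mul_of_nonneg_right hCx dist_nonneg)
  -- far pairs
  set K : Set (X × X) := {z | δ ≤ dist z.1 z.2} with hKdef
  have hKclosed : IsClosed K := isClosed_le continuous_const (by fun_prop)
  have hKcomp : IsCompact K := hKclosed.isCompact
  rcases K.eq_empty_or_nonempty with hKe | hKne
  · refine ⟨C₁, hC₁, fun p q => hnear p q ?_⟩
    by_contra h
    exact (Set.eq_empty_iff_forall_notMem.1 hKe (p, q)) (not_lt.1 h)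
  obtain ⟨z₀, hz₀K, hz₀min⟩ := hKcomp.exists_isMinOn hKne
    (Continuous.continuousOn (by fun_prop : Continuous fun z : X × X => dist (f z.1) (f z.2)))
  set m : ℝ := dist (f z₀.1) (f z₀.2) with hm
  have hmpos : 0 < m := by
    have hne : z₀.1 ≠ z₀.2 := by
      intro h
      have : δ ≤ dist z₀.1 z₀.2 := hz₀K
      rw [h, dist_self] at this
      linarith
    exact dist_pos.2 fun h => hne (hinj h)
  set D : ℝ := Metric.diam (Set.univ : Set X) with hD
  have hDle : ∀ p q : X, dist p q ≤ D := fun p q =>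
    Metric.dist_le_diam_of_mem isCompact_univ.isBounded (Set.mem_univ p) (Set.mem_univ q)
  set M : ℝ := Metric.diam (Set.range f) with hM
  have hMle : ∀ p q : X, dist (f p) (f q) ≤ M := fun p q =>
    Metric.dist_le_diam_of_mem (isCompact_range hf).isBounded ⟨p, rfl⟩ ⟨q, rfl⟩
  have h1 : 0 ≤ D / m := div_nonneg Metric.diam_nonneg hmpos.le
  have h2 : 0 ≤ M / δ := div_nonneg Metric.diam_nonneg hδ.le
  refine ⟨C₁ + D / m + M / δ, by linarith, ?_⟩
  intro p q
  have hCfpos : 0 < C₁ + D / m + M / δ := by linarith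
  rcases lt_or_ge (dist p q) δ with hlt | hge
  · obtain ⟨hl, hu⟩ := hnear p q hlt
    constructor
    · refine le_trans ?_ hl
      apply mul_le_mul_of_nonneg_right _ dist_nonneg
      apply one_div_le_one_div_of_le hC₁pos
      linarith
    · refine le_trans hu ?_
      apply mul_le_mul_of_nonneg_right _ dist_nonneg
      linarith
  · have hmK : m ≤ dist (f p) (f q) := hz₀min (show (p, q) ∈ K from hge)
    constructor
    · refine le_trans ?_ hmK
      rw [div_mul_eq_mul_div, div_le_iff₀ hCfpos]
      have hqD : dist p q ≤ D := hDle p q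
      have hDm : D ≤ m * (C₁ + D / m + M / δ) := by
        have : D / m ≤ C₁ + D / m + M / δ := by linarith
        calc D = m * (D / m) := by field_simp
          _ ≤ m * (C₁ + D / m + M / δ) := by nlinarith
      nlinarith
    · have hMC : M ≤ (C₁ + D / m + M / δ) * δ := by
        have hMδ : M / δ ≤ C₁ + D / m + M / δ := by linarith
        calc M = (M / δ) * δ := by field_simp
          _ ≤ (C₁ + D / m + M / δ) * δ := by nlinarith
      calc dist (f p) (f q) ≤ M := hMle p q
        _ ≤ (C₁ + D / m + M / δ) * δ := hMC
        _ ≤ (C₁ + D / m + M / δ) * dist p q := by nlinarith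
end

section
/- Let E be a real inner product space, let P, Q₁, Q₂ ∈ E with Q₁ ≠ P and Q₂ ≠ P, and let α be a real number with 0 < α ≤ π such that the angle ∠Q₁PQ₂ > α. Let C₁, C₂, ℓ₁, ℓ₂ be nonnegative real numbers with ℓ₁ ≤ C₁·dist(P,Q₁) and ℓ₂ ≤ C₂·dist(P,Q₂). Then ℓ₁ + ℓ₂ ≤ ((C₁ + C₂)/sin(α/2))·dist(Q₁,Q₂). -/
/-!
The law of cosines, written with the half-angle, reads
`‖x - y‖² = (‖x‖ - ‖y‖)² + 4‖x‖‖y‖ sin²(θ/2)` for `θ = ∠(x, y)`; since `sin²(θ/2) ≤ 1`, this is at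
least `sin²(θ/2) (‖x‖ + ‖y‖)²`. So two segments from `P` meeting at angle `θ > α` have total length
at most `dist Q₁ Q₂ / sin(α/2)`, and the Lavrentiev bounds `ℓᵢ ≤ Cᵢ · dist P Qᵢ` finish the proof.
-/

open InnerProductGeometry

namespace InnerProductGeometry

variable {V : Type*} [NormedAddCommGroup V] [InnerProductSpace ℝ V]

theorem norm_sub_sq_eq_sq_sub_add_four_mul_sin_sq_angle_div_two (x y : V) :
    ‖x - y‖ ^ 2 = (‖x‖ - ‖y‖) ^ 2 + 4 * (‖x‖ * ‖y‖) * Real.sin (angle x y / 2) ^ 2 := by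
  have hcos : Real.cos (angle x y) = 1 - 2 * Real.sin (angle x y / 2) ^ 2 := by
    rw [← Real.cos_two_mul_eq_one_sub, mul_div_cancel₀ _ two_ne_zero]
  rw [sq, norm_sub_sq_eq_norm_sq_add_norm_sq_sub_two_mul_norm_mul_norm_mul_cos_angle, hcos]
  ring

theorem sin_angle_div_two_mul_add_norm_le_norm_sub (x y : V) :
    Real.sin (angle x y / 2) * (‖x‖ + ‖y‖) ≤ ‖x - y‖ := by
  set s := Real.sin (angle x y / 2)
  have hs : s ^ 2 ≤ 1 := Real.sin_sq_le_one _
  have hsq : (s * (‖x‖ + ‖y‖)) ^ 2 ≤ ‖x - y‖ ^ 2 := by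
    rw [norm_sub_sq_eq_sq_sub_add_four_mul_sin_sq_angle_div_two]
    nlinarith [mul_le_of_le_one_left (sq_nonneg (‖x‖ - ‖y‖)) hs]
  exact abs_le_of_sq_le_sq' hsq (norm_nonneg _) |>.2

theorem add_norm_le_norm_sub_div_sin {x y : V} {α : ℝ} (hα : 0 < α) (hangle : α < angle x y) :
    ‖x‖ + ‖y‖ ≤ ‖x - y‖ / Real.sin (α / 2) := by
  have hθ : angle x y ≤ Real.pi := angle_le_pi x y
  have hsin_pos : 0 < Real.sin (α / 2) :=
    Real.sin_pos_of_pos_of_lt_pi (by linarith) (by linarith)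
  have hsin_le : Real.sin (α / 2) ≤ Real.sin (angle x y / 2) :=
    Real.sin_le_sin_of_le_of_le_pi_div_two (by linarith) (by linarith) (by linarith)
  rw [le_div_iff₀ hsin_pos, mul_comm]
  calc Real.sin (α / 2) * (‖x‖ + ‖y‖)
      ≤ Real.sin (angle x y / 2) * (‖x‖ + ‖y‖) := by gcongr
    _ ≤ ‖x - y‖ := sin_angle_div_two_mul_add_norm_le_norm_sub x y

end InnerProductGeometry

theorem lavrentiev_concatenation_general
    {E : Type*} [NormedAddCommGroup E] [InnerProductSpace ℝ E]
    (P Q₁ Q₂ : E)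
    (α : ℝ) (hα0 : 0 < α)
    (hangle : α < InnerProductGeometry.angle (Q₁ - P) (Q₂ - P))
    (C₁ C₂ ℓ₁ ℓ₂ : ℝ) (hC₁ : 0 ≤ C₁) (hC₂ : 0 ≤ C₂)
    (h1 : ℓ₁ ≤ C₁ * dist P Q₁) (h2 : ℓ₂ ≤ C₂ * dist P Q₂) :
    ℓ₁ + ℓ₂ ≤ ((C₁ + C₂) / Real.sin (α / 2)) * dist Q₁ Q₂ := by
  have hd₁ : dist P Q₁ = ‖Q₁ - P‖ := dist_comm P Q₁ ▸ dist_eq_norm Q₁ P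
  have hd₂ : dist P Q₂ = ‖Q₂ - P‖ := dist_comm P Q₂ ▸ dist_eq_norm Q₂ P
  have hd : dist Q₁ Q₂ = ‖(Q₁ - P) - (Q₂ - P)‖ := by rw [sub_sub_sub_cancel_right, dist_eq_norm]
  have hsum := add_norm_le_norm_sub_div_sin hα0 hangle
  calc ℓ₁ + ℓ₂ ≤ C₁ * ‖Q₁ - P‖ + C₂ * ‖Q₂ - P‖ := hd₁ ▸ hd₂ ▸ add_le_add h1 h2
    _ ≤ (C₁ + C₂) * (‖Q₁ - P‖ + ‖Q₂ - P‖) := by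
      nlinarith [mul_nonneg hC₁ (norm_nonneg (Q₂ - P)), mul_nonneg hC₂ (norm_nonneg (Q₁ - P))]
    _ ≤ (C₁ + C₂) * (dist Q₁ Q₂ / Real.sin (α / 2)) := by
      rw [hd]; gcongr
    _ = ((C₁ + C₂) / Real.sin (α / 2)) * dist Q₁ Q₂ := by ring

/-- Concatenation lemma for Lavrentiev arcs: if two arcs of lengths `ℓ₁ ≤ C₁·dist(P,Q₁)` and
`ℓ₂ ≤ C₂·dist(P,Q₂)` meet at `P` with angle `∠Q₁PQ₂ > α`, then
`ℓ₁ + ℓ₂ ≤ ((C₁+C₂)/sin(α/2))·dist(Q₁,Q₂)`. -/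
theorem lavrentiev_concatenation
    {E : Type*} [NormedAddCommGroup E] [InnerProductSpace ℝ E]
    (P Q₁ Q₂ : E) (hQ₁ : Q₁ ≠ P) (hQ₂ : Q₂ ≠ P)
    (α : ℝ) (hα0 : 0 < α) (hαpi : α ≤ Real.pi)
    (hangle : α < InnerProductGeometry.angle (Q₁ - P) (Q₂ - P))
    (C₁ C₂ ℓ₁ ℓ₂ : ℝ) (hC₁ : 0 ≤ C₁) (hC₂ : 0 ≤ C₂) (hℓ₁ : 0 ≤ ℓ₁) (hℓ₂ : 0 ≤ ℓ₂)
    (h1 : ℓ₁ ≤ C₁ * dist P Q₁) (h2 : ℓ₂ ≤ C₂ * dist P Q₂) :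
    ℓ₁ + ℓ₂ ≤ ((C₁ + C₂) / Real.sin (α / 2)) * dist Q₁ Q₂ :=
  lavrentiev_concatenation_general P Q₁ Q₂ α hα0 hangle C₁ C₂ ℓ₁ ℓ₂ hC₁ hC₂ h1 h2
end

section
/- Let n ∈ ℕ and let F : [0,1] × [0,1] → ℝⁿ be a map such that there exists a continuous map G : [0,1] × [0,1] → ℝⁿ with G(s,t) ≠ 0 for all (s,t) and such that for every t ∈ [0,1] and every s ∈ [0,1] the map s' ↦ F(s',t) has derivative G(s,t) at s (within [0,1]); assume moreover that for every t ∈ [0,1] the map s ↦ F(s,t) is injective on [0,1]. Then there exists a real number C ≥ 1 such that for every t ∈ [0,1] and all s, s' ∈ [0,1] one has (1/C)·|s' − s| ≤ ‖F(s',t) − F(s,t)‖ ≤ C·|s' − s|. -/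
open Set intervalIntegral MeasureTheory

/-- A `C¹` isotopy of non-closed curves in `ℝⁿ` with nowhere-vanishing, jointly continuous
derivative `∂F/∂s` and injective time-slices consists of `C`-bi-Lipschitz maps for a common
constant `C`. -/
theorem biLipschitz_of_C1_isotopy
    (n : ℕ) (F G : ℝ → ℝ → EuclideanSpace ℝ (Fin n))
    (hG_cont : ContinuousOn (fun p : ℝ × ℝ => G p.1 p.2) (Set.Icc 0 1 ×ˢ Set.Icc 0 1))
    (hG_ne : ∀ s ∈ Set.Icc (0:ℝ) 1, ∀ t ∈ Set.Icc (0:ℝ) 1, G s t ≠ 0)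
    (hderiv : ∀ t ∈ Set.Icc (0:ℝ) 1, ∀ s ∈ Set.Icc (0:ℝ) 1,
      HasDerivWithinAt (fun s' => F s' t) (G s t) (Set.Icc 0 1) s)
    (hinj : ∀ t ∈ Set.Icc (0:ℝ) 1, Set.InjOn (fun s => F s t) (Set.Icc 0 1)) :
    ∃ C : ℝ, 1 ≤ C ∧ ∀ t ∈ Set.Icc (0:ℝ) 1, ∀ s ∈ Set.Icc (0:ℝ) 1, ∀ s' ∈ Set.Icc (0:ℝ) 1,
      (1 / C) * |s' - s| ≤ ‖F s' t - F s t‖ ∧ ‖F s' t - F s t‖ ≤ C * |s' - s| := by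
  -- projection onto `[0,1]`
  set π : ℝ → ℝ := fun x => max 0 (min x 1) with hπ
  have hπ_cont : Continuous π := continuous_const.max (continuous_id.min continuous_const)
  have hπ_mem : ∀ x, π x ∈ Icc (0:ℝ) 1 := fun x =>
    ⟨le_max_left _ _, max_le (by norm_num) (min_le_right _ _)⟩
  have hπ_id : ∀ x ∈ Icc (0:ℝ) 1, π x = x := by
    intro x hx
    simp only [hπ]
    rw [min_eq_left hx.2, max_eq_right hx.1]
  -- global continuous extension of G
  set g : ℝ → ℝ → EuclideanSpace ℝ (Fin n) := fun u t => G (π u) (π t) with hg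
  have hg_cont : Continuous (fun p : ℝ × ℝ => g p.1 p.2) := by
    refine hG_cont.comp_continuous ((hπ_cont.comp continuous_fst).prodMk
      (hπ_cont.comp continuous_snd)) ?_
    exact fun p => ⟨hπ_mem _, hπ_mem _⟩
  have hg_eq : ∀ u ∈ Icc (0:ℝ) 1, ∀ t ∈ Icc (0:ℝ) 1, g u t = G u t := by
    intro u hu t ht
    simp only [hg, hπ_id u hu, hπ_id t ht]
  have hg_cont_t : ∀ t : ℝ, Continuous fun u => g u t := fun t =>
    hg_cont.comp (continuous_id.prodMk continuous_const)
  -- FTC : `F s' t - F s t = ∫ u in s..s', g u t`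
  have key : ∀ t ∈ Icc (0:ℝ) 1, ∀ s ∈ Icc (0:ℝ) 1, ∀ s' ∈ Icc (0:ℝ) 1, s ≤ s' →
      F s' t - F s t = ∫ u in s..s', g u t := by
    intro t ht s hs s' hs' hle
    have hsub : Icc s s' ⊆ Icc (0:ℝ) 1 := Icc_subset_Icc hs.1 hs'.2
    have hcont : ContinuousOn (fun u => F u t) (Icc s s') := fun x hx =>
      ((hderiv t ht x (hsub hx)).continuousWithinAt).mono hsub
    have hd : ∀ x ∈ Ioo s s', HasDerivWithinAt (fun u => F u t) (g x t) (Ioi x) x := by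
      intro x hx
      have hx01 : x ∈ Icc (0:ℝ) 1 := hsub ⟨hx.1.le, hx.2.le⟩
      have hxo : x ∈ Ioo (0:ℝ) 1 := ⟨lt_of_le_of_lt hs.1 hx.1, lt_of_lt_of_le hx.2 hs'.2⟩
      have h1 : HasDerivAt (fun u => F u t) (G x t) x :=
        (hderiv t ht x hx01).hasDerivAt (Icc_mem_nhds hxo.1 hxo.2)
      rw [hg_eq x hx01 t ht]
      exact h1.hasDerivWithinAt
    have hint : IntervalIntegrable (fun u => g u t) volume s s' :=
      (hg_cont_t t).intervalIntegrable _ _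
    exact (integral_eq_sub_of_hasDeriv_right_of_le hle hcont hd hint).symm
  have keyAll : ∀ t ∈ Icc (0:ℝ) 1, ∀ s ∈ Icc (0:ℝ) 1, ∀ s' ∈ Icc (0:ℝ) 1,
      F s' t - F s t = ∫ u in s..s', g u t := by
    intro t ht s hs s' hs'
    rcases le_total s s' with h | h
    · exact key t ht s hs s' hs' h
    · rw [intervalIntegral.integral_symm, ← key t ht s' hs' s hs h]
      abel
  -- bounds on `‖G‖` over the compact square
  have hSq : IsCompact (Icc (0:ℝ) 1 ×ˢ Icc (0:ℝ) 1) := isCompact_Icc.prod isCompact_Icc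
  have hSqne : (Icc (0:ℝ) 1 ×ˢ Icc (0:ℝ) 1).Nonempty :=
    ⟨(0, 0), ⟨left_mem_Icc.2 zero_le_one, left_mem_Icc.2 zero_le_one⟩⟩
  obtain ⟨M, hM⟩ := hSq.exists_bound_of_continuousOn hG_cont
  have hM0 : 0 ≤ M := le_trans (norm_nonneg _) (hM _ hSqne.choose_spec)
  obtain ⟨x₀, hx₀, hmin'⟩ := hSq.exists_isMinOn hSqne (hG_cont.norm)
  have hmin := isMinOn_iff.1 hmin'
  set m : ℝ := ‖G x₀.1 x₀.2‖ with hm_def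
  have hm_pos : 0 < m := norm_pos_iff.2 (hG_ne _ hx₀.1 _ hx₀.2)
  have hm_le : ∀ u ∈ Icc (0:ℝ) 1, ∀ t ∈ Icc (0:ℝ) 1, m ≤ ‖G u t‖ := fun u hu t ht =>
    hmin (u, t) ⟨hu, ht⟩
  -- uniform continuity: get δ for ε = m/2
  have hUC := hSq.uniformContinuousOn_of_continuous hG_cont
  rw [Metric.uniformContinuousOn_iff] at hUC
  obtain ⟨δ₀, hδ₀pos, hδ₀⟩ := hUC (m / 2) (by linarith)
  set δ : ℝ := min (δ₀ / 2) 1 with hδ_def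
  have hδpos : 0 < δ := lt_min (by linarith) one_pos
  have hδ1 : δ ≤ 1 := min_le_right _ _
  -- near-diagonal lower bound
  have near : ∀ t ∈ Icc (0:ℝ) 1, ∀ s ∈ Icc (0:ℝ) 1, ∀ s' ∈ Icc (0:ℝ) 1, s ≤ s' → s' - s ≤ δ →
      m / 2 * (s' - s) ≤ ‖F s' t - F s t‖ := by
    intro t ht s hs s' hs' hle hnear
    rw [keyAll t ht s hs s' hs']
    have hint : IntervalIntegrable (fun u => g u t) volume s s' :=
      (hg_cont_t t).intervalIntegrable _ _
    have hintc : IntervalIntegrable (fun _ : ℝ => g s t) volume s s' :=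
      intervalIntegrable_const
    have split : (∫ u in s..s', g u t)
        = (s' - s) • g s t + ∫ u in s..s', (g u t - g s t) := by
      rw [intervalIntegral.integral_sub hint hintc, intervalIntegral.integral_const]
      abel
    have hJ : ‖∫ u in s..s', (g u t - g s t)‖ ≤ m / 2 * |s' - s| := by
      apply intervalIntegral.norm_integral_le_of_norm_le_const
      intro x hx
      rw [Set.uIoc_of_le hle] at hx
      have hx01 : x ∈ Icc (0:ℝ) 1 := ⟨le_trans hs.1 hx.1.le, le_trans hx.2 hs'.2⟩
      have hdist : dist ((x, t) : ℝ × ℝ) (s, t) < δ₀ := by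
        rw [Prod.dist_eq]
        simp only [dist_self]
        have : dist x s < δ₀ := by
          rw [Real.dist_eq, abs_of_nonneg (by linarith [hx.1.le] : (0:ℝ) ≤ x - s)]
          have : δ ≤ δ₀ / 2 := min_le_left _ _
          have hxs : x - s ≤ s' - s := by linarith [hx.2]
          linarith
        exact max_lt this hδ₀pos
      have := hδ₀ (x, t) ⟨hx01, ht⟩ (s, t) ⟨hs, ht⟩ hdist
      rw [hg_eq x hx01 t ht, hg_eq s hs t ht]
      rw [dist_eq_norm] at this
      exact this.le
    have hG' : m * (s' - s) ≤ ‖(s' - s) • g s t‖ := by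
      rw [norm_smul, Real.norm_eq_abs, abs_of_nonneg (by linarith : (0:ℝ) ≤ s' - s),
        hg_eq s hs t ht, mul_comm]
      exact mul_le_mul_of_nonneg_left (hm_le s hs t ht) (by linarith)
    rw [split]
    have h1 : ‖(s' - s) • g s t‖ - ‖∫ u in s..s', (g u t - g s t)‖
        ≤ ‖(s' - s) • g s t + ∫ u in s..s', (g u t - g s t)‖ := by
      have := norm_add_le (((s' - s) • g s t) + ∫ u in s..s', (g u t - g s t))
        (-(∫ u in s..s', (g u t - g s t)))
      simp only [add_neg_cancel_right, norm_neg] at this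
      linarith
    have habs : |s' - s| = s' - s := abs_of_nonneg (by linarith)
    rw [habs] at hJ
    linarith
  -- far-from-diagonal lower bound via compactness
  set D : ℝ × ℝ × ℝ → EuclideanSpace ℝ (Fin n) :=
    fun x => ∫ u in x.1..x.2.1, g u x.2.2 with hD_def
  have hD_cont : Continuous D := by
    have huncur : Continuous (Function.uncurry fun (x : ℝ × ℝ × ℝ) u => g u x.2.2) := by
      have he : Function.uncurry (fun (x : ℝ × ℝ × ℝ) u => g u x.2.2)
          = (fun p : ℝ × ℝ => g p.1 p.2) ∘ (fun q : (ℝ × ℝ × ℝ) × ℝ => (q.2, q.1.2.2)) := rfl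
      rw [he]
      exact hg_cont.comp (continuous_snd.prodMk
        ((continuous_snd.comp continuous_snd).comp continuous_fst))
    have h1 : Continuous fun x : ℝ × ℝ × ℝ => ∫ u in (0:ℝ)..x.2.1, g u x.2.2 :=
      intervalIntegral.continuous_parametric_intervalIntegral_of_continuous huncur
        (continuous_fst.comp continuous_snd)
    have h2 : Continuous fun x : ℝ × ℝ × ℝ => ∫ u in (0:ℝ)..x.1, g u x.2.2 :=
      intervalIntegral.continuous_parametric_intervalIntegral_of_continuous huncur
        continuous_fst
    have : D = fun x : ℝ × ℝ × ℝ =>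
        (∫ u in (0:ℝ)..x.2.1, g u x.2.2) - ∫ u in (0:ℝ)..x.1, g u x.2.2 := by
      funext x
      rw [hD_def]
      exact (intervalIntegral.integral_interval_sub_left
        ((hg_cont_t _).intervalIntegrable _ _) ((hg_cont_t _).intervalIntegrable _ _)).symm
    rw [this]
    exact h1.sub h2
  set K : Set (ℝ × ℝ × ℝ) :=
    (Icc (0:ℝ) 1 ×ˢ Icc (0:ℝ) 1 ×ˢ Icc (0:ℝ) 1) ∩ {x | δ ≤ |x.2.1 - x.1|} with hK_def
  have hK_comp : IsCompact K := by
    apply (isCompact_Icc.prod (isCompact_Icc.prod isCompact_Icc)).inter_right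
    exact isClosed_le continuous_const
      (((continuous_fst.comp continuous_snd).sub continuous_fst).abs)
  have hD_eq : ∀ x ∈ K, D x = F x.2.1 x.2.2 - F x.1 x.2.2 := by
    rintro ⟨s, s', t⟩ ⟨⟨hs, hs', ht⟩, -⟩
    exact (keyAll t ht s hs s' hs').symm
  obtain ⟨ε₀, hε₀pos, hε₀⟩ : ∃ ε₀ : ℝ, 0 < ε₀ ∧ ∀ x ∈ K, ε₀ ≤ ‖D x‖ := by
    rcases K.eq_empty_or_nonempty with hKe | hKne
    · exact ⟨1, one_pos, by simp [hKe]⟩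
    · obtain ⟨y, hy, hymin'⟩ := hK_comp.exists_isMinOn hKne hD_cont.norm.continuousOn
      have hymin := isMinOn_iff.1 hymin'
      refine ⟨‖D y‖, ?_, hymin⟩
      rw [norm_pos_iff, hD_eq y hy, sub_ne_zero]
      obtain ⟨⟨hys, hys', hyt⟩, hyfar⟩ := hy
      intro hFeq
      have := hinj y.2.2 hyt hys' hys hFeq
      have hyfar' : δ ≤ |y.2.1 - y.1| := hyfar
      rw [this, sub_self, abs_zero] at hyfar'
      linarith
  -- assemble the constant
  refine ⟨max (M + 1) (max (2 / m) (1 / ε₀)), le_max_of_le_left (by linarith), ?_⟩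
  set C : ℝ := max (M + 1) (max (2 / m) (1 / ε₀)) with hC_def
  have hCpos : 0 < C := lt_of_lt_of_le (by linarith) (le_max_left _ _)
  have hC_ge_m : 1 / C ≤ m / 2 := by
    have h2m : (0:ℝ) < 2 / m := by positivity
    have : 2 / m ≤ C := le_trans (le_max_left _ _) (le_max_right _ _)
    calc 1 / C ≤ 1 / (2 / m) := one_div_le_one_div_of_le h2m this
    _ = m / 2 := by rw [one_div_div]
  have hC_ge_ε : 1 / C ≤ ε₀ := by
    have h1ε : (0:ℝ) < 1 / ε₀ := by positivity
    have : 1 / ε₀ ≤ C := le_trans (le_max_right _ _) (le_max_right _ _)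
    calc 1 / C ≤ 1 / (1 / ε₀) := one_div_le_one_div_of_le h1ε this
    _ = ε₀ := one_div_one_div _
  intro t ht s hs s' hs'
  constructor
  · -- lower bound
    rcases le_or_gt (|s' - s|) δ with hnear | hfar
    · have hmain : m / 2 * |s' - s| ≤ ‖F s' t - F s t‖ := by
        rcases le_total s s' with h | h
        · have := near t ht s hs s' hs' h (by rwa [abs_of_nonneg (by linarith)] at hnear)
          rwa [abs_of_nonneg (by linarith)]
        · have hnear' : s - s' ≤ δ := by rwa [abs_sub_comm, abs_of_nonneg (by linarith)] at hnear
          have := near t ht s' hs' s hs h hnear'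
          rw [abs_sub_comm, abs_of_nonneg (by linarith), ← norm_neg]
          simpa using this
      calc 1 / C * |s' - s| ≤ m / 2 * |s' - s| :=
            mul_le_mul_of_nonneg_right hC_ge_m (abs_nonneg _)
        _ ≤ _ := hmain
    · have hxK : ((s, s', t) : ℝ × ℝ × ℝ) ∈ K := ⟨⟨hs, hs', ht⟩, hfar.le⟩
      have h1 : ε₀ ≤ ‖F s' t - F s t‖ := by
        have := hε₀ _ hxK
        rwa [hD_eq _ hxK] at this
      have habs1 : |s' - s| ≤ 1 := by
        rw [abs_sub_le_iff]
        constructor <;> linarith [hs.1, hs.2, hs'.1, hs'.2]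
      calc 1 / C * |s' - s| ≤ ε₀ * 1 :=
            mul_le_mul hC_ge_ε habs1 (abs_nonneg _) hε₀pos.le
        _ = ε₀ := mul_one _
        _ ≤ _ := h1
  · -- upper bound
    rw [keyAll t ht s hs s' hs']
    have hle : ‖∫ u in s..s', g u t‖ ≤ M * |s' - s| := by
      apply intervalIntegral.norm_integral_le_of_norm_le_const
      intro x hx
      have hx01 : x ∈ Icc (0:ℝ) 1 := by
        rcases le_total s s' with h | h
        · rw [Set.uIoc_of_le h] at hx
          exact ⟨le_trans hs.1 hx.1.le, le_trans hx.2 hs'.2⟩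
        · rw [Set.uIoc_of_ge h] at hx
          exact ⟨le_trans hs'.1 hx.1.le, le_trans hx.2 hs.2⟩
      rw [hg_eq x hx01 t ht]
      exact hM (x, t) ⟨hx01, ht⟩
    refine hle.trans (mul_le_mul_of_nonneg_right ?_ (abs_nonneg _))
    exact le_trans (by linarith) (le_max_left _ _)
end

section
/- Define F : [-1,1] × [0,1] → ℂ by F(s,t) = (s + (1−2t)·i)/((1−2t)·i·s + 1), where i is the imaginary unit. Then: (a) the denominator (1−2t)·i·s + 1 is nonzero for all s ∈ [-1,1] and t ∈ [0,1]; (b) F is Lipschitz on [-1,1] × [0,1] (with respect to the product metric); (c) for every t ∈ [0,1] and all s, s' ∈ [-1,1] one has (1/π)·|s' − s| ≤ |F(s',t) − F(s,t)| ≤ π·|s' − s|. -/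
/-!
Write `a = 1 - 2t ∈ [-1, 1]` and `D_a(s) = a i s + 1`, so that `F(s, t) = (s + a i) / D_a(s)` with
`|D_a(s)|² = 1 + a²s² ∈ [1, 1 + a²]` for `|s| ≤ 1`. Clearing denominators,
`F(s', t) - F(s, t) = (s' - s)(1 + a²) / (D_a(s') D_a(s))`, so each slice `F(·, t)` is bi-Lipschitz
with constants `1` and `1 + a² ≤ 2`, both within `π`. Likewise, varying the parameter,
`(s + a i)/D_a(s) - (s + b i)/D_b(s) = i (a - b)(1 - s²) / (D_a(s) D_b(s))`, so `F` is also
Lipschitz in `t`, and separate Lipschitz bounds in each variable give one on the product.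
-/

open Complex

/-- The isotopy `F(s,t) = (s + (1-2t)i)/((1-2t)is + 1)` from the upper unit semicircle to the
lower one. -/
noncomputable def bypassIsotopy (p : ℝ × ℝ) : ℂ :=
  ((p.1 : ℂ) + (1 - 2 * (p.2 : ℂ)) * Complex.I) /
    ((1 - 2 * (p.2 : ℂ)) * Complex.I * (p.1 : ℂ) + 1)

theorem LipschitzOnWith.prod_of_slices {α β γ : Type*} [PseudoEMetricSpace α]
    [PseudoEMetricSpace β] [PseudoEMetricSpace γ] {f : α × β → γ} {s : Set α} {t : Set β}
    {Kα Kβ : NNReal} (hα : ∀ b ∈ t, LipschitzOnWith Kα (fun a => f (a, b)) s)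
    (hβ : ∀ a ∈ s, LipschitzOnWith Kβ (fun b => f (a, b)) t) :
    LipschitzOnWith (Kα + Kβ) f (s ×ˢ t) := by
  rintro ⟨a₁, b₁⟩ ⟨ha₁, hb₁⟩ ⟨a₂, b₂⟩ ⟨ha₂, hb₂⟩
  simp only [ENNReal.coe_add, add_mul]
  calc edist (f (a₁, b₁)) (f (a₂, b₂))
      ≤ edist (f (a₁, b₁)) (f (a₂, b₁)) + edist (f (a₂, b₁)) (f (a₂, b₂)) := edist_triangle ..
    _ ≤ Kα * edist a₁ a₂ + Kβ * edist b₁ b₂ := add_le_add (hα b₁ hb₁ ha₁ ha₂) (hβ a₂ ha₂ hb₁ hb₂)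
    _ ≤ Kα * edist (a₁, b₁) (a₂, b₂) + Kβ * edist (a₁, b₁) (a₂, b₂) := by
      gcongr
      exacts [le_max_left _ _, le_max_right _ _]

noncomputable def arcDenom (a s : ℝ) : ℂ := a * I * s + 1

/-- For `a ∈ [-1, 1]`, `arcMap a` maps `[-1, 1]` onto the arc of generalized circle through
`-1`, `a * I` and `1`. -/
noncomputable def arcMap (a s : ℝ) : ℂ := (s + a * I) / arcDenom a s

section ArcMap

variable (a b s s' : ℝ)

theorem norm_arcDenom_sq : ‖arcDenom a s‖ ^ 2 = 1 + (a * s) ^ 2 := by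
  rw [arcDenom, Complex.sq_norm, normSq_apply]
  simp only [add_re, mul_re, ofReal_re, I_re, mul_zero, ofReal_im, I_im, mul_one, sub_self,
    zero_mul, mul_im, add_zero, one_re, zero_add, add_im, one_im]
  ring

theorem one_le_norm_arcDenom : 1 ≤ ‖arcDenom a s‖ := by
  nlinarith [norm_arcDenom_sq a s, norm_nonneg (arcDenom a s), sq_nonneg (a * s)]

theorem arcDenom_ne_zero : arcDenom a s ≠ 0 :=
  norm_pos_iff.mp (one_pos.trans_le (one_le_norm_arcDenom a s))

theorem one_le_norm_arcDenom_mul_norm_arcDenom : 1 ≤ ‖arcDenom a s‖ * ‖arcDenom b s'‖ :=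
  one_le_mul_of_one_le_of_one_le (one_le_norm_arcDenom a s) (one_le_norm_arcDenom b s')

variable {s} in
theorem norm_arcDenom_le_sqrt (hs : |s| ≤ 1) : ‖arcDenom a s‖ ≤ √(1 + a ^ 2) := by
  have hs2 : s ^ 2 ≤ 1 := (sq_le_one_iff_abs_le_one s).mpr hs
  rw [← Real.sqrt_sq (norm_nonneg _), norm_arcDenom_sq]
  exact Real.sqrt_le_sqrt (by nlinarith [mul_le_mul_of_nonneg_left hs2 (sq_nonneg a)])

theorem arcMap_sub_arcMap :
    arcMap a s' - arcMap a s = ((s' - s) * (1 + a ^ 2) : ℝ) / (arcDenom a s' * arcDenom a s) := by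
  rw [arcMap, arcMap, div_sub_div _ _ (arcDenom_ne_zero a s') (arcDenom_ne_zero a s)]
  congr 1
  push_cast [arcDenom]
  linear_combination (a : ℂ) ^ 2 * ((s : ℂ) - s') * I_sq

theorem norm_arcMap_sub_arcMap :
    ‖arcMap a s' - arcMap a s‖ = |s' - s| * (1 + a ^ 2) / (‖arcDenom a s'‖ * ‖arcDenom a s‖) := by
  rw [arcMap_sub_arcMap, norm_div, norm_mul, norm_real, Real.norm_eq_abs, abs_mul,
    abs_of_pos (by positivity : (0 : ℝ) < 1 + a ^ 2)]

theorem norm_arcMap_sub_arcMap_le : ‖arcMap a s' - arcMap a s‖ ≤ (1 + a ^ 2) * |s' - s| := by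
  rw [norm_arcMap_sub_arcMap, mul_comm (1 + a ^ 2)]
  exact div_le_self (by positivity) (one_le_norm_arcDenom_mul_norm_arcDenom a a s' s)

variable {s s'} in
theorem abs_sub_le_norm_arcMap_sub_arcMap (hs : |s| ≤ 1) (hs' : |s'| ≤ 1) :
    |s' - s| ≤ ‖arcMap a s' - arcMap a s‖ := by
  have hD : ‖arcDenom a s'‖ * ‖arcDenom a s‖ ≤ 1 + a ^ 2 :=
    calc _ ≤ √(1 + a ^ 2) * √(1 + a ^ 2) :=
          mul_le_mul (norm_arcDenom_le_sqrt a hs') (norm_arcDenom_le_sqrt a hs)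
            (norm_nonneg _) (Real.sqrt_nonneg _)
      _ = 1 + a ^ 2 := Real.mul_self_sqrt (by positivity)
  rw [norm_arcMap_sub_arcMap,
    le_div_iff₀ (one_pos.trans_le (one_le_norm_arcDenom_mul_norm_arcDenom a a s' s))]
  exact mul_le_mul_of_nonneg_left hD (abs_nonneg _)

theorem arcMap_sub_arcMap_param :
    arcMap a s - arcMap b s = I * ((a - b) * (1 - s ^ 2) : ℝ) / (arcDenom a s * arcDenom b s) := by
  rw [arcMap, arcMap, div_sub_div _ _ (arcDenom_ne_zero a s) (arcDenom_ne_zero b s)]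
  congr 1
  push_cast [arcDenom]
  ring

variable {s} in
theorem norm_arcMap_sub_arcMap_param_le (hs : |s| ≤ 1) :
    ‖arcMap a s - arcMap b s‖ ≤ |a - b| := by
  have hs2 : s ^ 2 ≤ 1 := (sq_le_one_iff_abs_le_one s).mpr hs
  simp only [arcMap_sub_arcMap_param, norm_div, norm_mul, norm_I, one_mul, norm_real,
    Real.norm_eq_abs]
  rw [abs_of_nonneg (by linarith : 0 ≤ 1 - s ^ 2)]
  calc _ ≤ |a - b| * (1 - s ^ 2) :=
        div_le_self (mul_nonneg (abs_nonneg _) (by linarith))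
          (one_le_norm_arcDenom_mul_norm_arcDenom a b s s)
    _ ≤ |a - b| := mul_le_of_le_one_right (abs_nonneg _) (by nlinarith [sq_nonneg s])

end ArcMap

theorem bypassIsotopy_eq_arcMap (s t : ℝ) : bypassIsotopy (s, t) = arcMap (1 - 2 * t) s := by
  simp only [bypassIsotopy, arcMap, arcDenom]
  push_cast
  rfl

theorem lipschitzWith_bypassIsotopy_left {t : ℝ} (ht : t ∈ Set.Icc (0 : ℝ) 1) :
    LipschitzWith 2 fun s => bypassIsotopy (s, t) := by
  refine LipschitzWith.of_dist_le_mul fun s s' => ?_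
  have ha : (1 - 2 * t) ^ 2 ≤ 1 := by nlinarith [ht.1, ht.2]
  rw [dist_eq_norm, Real.dist_eq, bypassIsotopy_eq_arcMap, bypassIsotopy_eq_arcMap]
  calc _ ≤ (1 + (1 - 2 * t) ^ 2) * |s - s'| := norm_arcMap_sub_arcMap_le _ _ _
    _ ≤ 2 * |s - s'| := by gcongr; linarith

theorem lipschitzWith_bypassIsotopy_right {s : ℝ} (hs : s ∈ Set.Icc (-1 : ℝ) 1) :
    LipschitzWith 2 fun t => bypassIsotopy (s, t) := by
  refine LipschitzWith.of_dist_le_mul fun t t' => ?_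
  rw [dist_eq_norm, Real.dist_eq, bypassIsotopy_eq_arcMap, bypassIsotopy_eq_arcMap]
  calc _ ≤ |(1 - 2 * t) - (1 - 2 * t')| := norm_arcMap_sub_arcMap_param_le _ _ (abs_le.mpr hs)
    _ = 2 * |t - t'| := by
      rw [show (1 - 2 * t) - (1 - 2 * t') = -2 * (t - t') by ring, abs_mul]; norm_num

/-- (a) the denominator of `F` never vanishes on `[-1,1] × [0,1]`; (b) `F` is Lipschitz on
`[-1,1] × [0,1]`; (c) each time-slice `F(·,t)` is `π`-bi-Lipschitz. -/
theorem bypassIsotopy_properties :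
    (∀ s ∈ Set.Icc (-1:ℝ) 1, ∀ t ∈ Set.Icc (0:ℝ) 1,
      ((1 - 2 * (t : ℂ)) * Complex.I * (s : ℂ) + 1) ≠ 0) ∧
    (∃ K : NNReal, LipschitzOnWith K bypassIsotopy (Set.Icc (-1:ℝ) 1 ×ˢ Set.Icc (0:ℝ) 1)) ∧
    (∀ t ∈ Set.Icc (0:ℝ) 1, ∀ s ∈ Set.Icc (-1:ℝ) 1, ∀ s' ∈ Set.Icc (-1:ℝ) 1,
      (1 / Real.pi) * |s' - s| ≤ ‖bypassIsotopy (s', t) - bypassIsotopy (s, t)‖ ∧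
        ‖bypassIsotopy (s', t) - bypassIsotopy (s, t)‖ ≤ Real.pi * |s' - s|) := by
  refine ⟨fun s _ t _ => ?_, ⟨2 + 2, LipschitzOnWith.prod_of_slices
    (fun t ht => (lipschitzWith_bypassIsotopy_left ht).lipschitzOnWith)
    (fun s hs => (lipschitzWith_bypassIsotopy_right hs).lipschitzOnWith)⟩,
    fun t ht s hs s' hs' => ⟨?_, ?_⟩⟩
  · simpa [arcDenom] using arcDenom_ne_zero (1 - 2 * t) s
  · rw [bypassIsotopy_eq_arcMap, bypassIsotopy_eq_arcMap]
    calc 1 / Real.pi * |s' - s| ≤ |s' - s| :=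
          mul_le_of_le_one_left (abs_nonneg _) ((div_le_one Real.pi_pos).mpr (by
            linarith [Real.pi_gt_three]))
      _ ≤ _ := abs_sub_le_norm_arcMap_sub_arcMap _ (abs_le.mpr hs) (abs_le.mpr hs')
  · calc _ = dist (bypassIsotopy (s', t)) (bypassIsotopy (s, t)) := (dist_eq_norm _ _).symm
      _ ≤ 2 * dist s' s := (lipschitzWith_bypassIsotopy_left ht).dist_le_mul s' s
      _ ≤ Real.pi * |s' - s| := by
        rw [Real.dist_eq]; gcongr; linarith [Real.pi_gt_three]
end

section
/- Let (pₙ) be a sequence of points in Euclidean space ℝ³ converging to a point p. Then there exist a map γ : [0,1] → ℝ³ that is continuously differentiable on [0,1] and an infinite set S ⊆ ℕ such that γ(1) = p and for every n ∈ S there exists s ∈ [0,1] with γ(s) = pₙ. -/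
/-!
Pass to a subsequence with `‖x (φ k) - p‖ ≤ 4⁻¹ ^ k` and add to `p` the displacements
`x (φ k) - p`, each multiplied by a bump of width `≈ 2⁻¹ ^ k` around time `1 - 2⁻¹ ^ k`.
The supports are disjoint, so at time `1 - 2⁻¹ ^ k` the curve is at `x (φ k)`, and at time `1`
it is at `p`. The `k`-th bump has slope `O(2 ^ k)`, so the derivatives of the terms are
`O(2⁻¹ ^ k)`: the series of derivatives converges uniformly and the curve is `C¹`.
-/

open Filter Topology Set

theorem half_le_abs_two_zpow_sub_one {m : ℤ} (hm : m ≠ 0) : 1 / 2 ≤ |(2 : ℝ) ^ m - 1| := by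
  rcases hm.lt_or_gt with hm | hm
  · have : (2 : ℝ) ^ m ≤ 2 ^ (-1 : ℤ) := zpow_le_zpow_right₀ one_le_two (by omega)
    rw [abs_of_neg (by norm_num at this; linarith)]
    norm_num at this; linarith
  · have : (2 : ℝ) ^ (1 : ℤ) ≤ 2 ^ m := zpow_le_zpow_right₀ one_le_two (by omega)
    rw [abs_of_pos (by norm_num at this; linarith)]
    norm_num at this; linarith

noncomputable section

def unitBump : ContDiffBump (1 : ℝ) := ⟨1 / 4, 1 / 2, by norm_num, by norm_num⟩

/-- Supported where `|1 - t - 2⁻¹ ^ j| < 2⁻¹ ^ (j + 1)`, and equal to `1` at `t = 1 - 2⁻¹ ^ j`. -/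
def dyadicBump (j : ℕ) (t : ℝ) : ℝ := unitBump (2 ^ j * (1 - t))

theorem dyadicBump_one (j : ℕ) : dyadicBump j 1 = 0 :=
  unitBump.zero_of_le_dist (by norm_num [unitBump, Real.dist_eq])

theorem dyadicBump_self (k : ℕ) : dyadicBump k (1 - 2⁻¹ ^ k) = 1 :=
  unitBump.one_of_mem_closedBall (by simp [unitBump])

theorem dyadicBump_of_ne {j k : ℕ} (hjk : j ≠ k) : dyadicBump j (1 - 2⁻¹ ^ k) = 0 := by
  have hpow : (2 : ℝ) ^ j * (1 - (1 - 2⁻¹ ^ k)) = 2 ^ ((j : ℤ) - k) := by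
    rw [zpow_sub₀ two_ne_zero]; simp [div_eq_mul_inv]
  refine unitBump.zero_of_le_dist ?_
  rw [hpow, Real.dist_eq]
  exact half_le_abs_two_zpow_sub_one (by omega)

theorem abs_dyadicBump_le_one (j : ℕ) (t : ℝ) : |dyadicBump j t| ≤ 1 := by
  rw [dyadicBump, abs_of_nonneg unitBump.nonneg]
  exact unitBump.le_one

theorem hasDerivAt_dyadicBump (j : ℕ) (t : ℝ) :
    HasDerivAt (dyadicBump j) (deriv unitBump (2 ^ j * (1 - t)) * (2 ^ j * -1)) t := by
  have hinner : HasDerivAt (fun t : ℝ => 2 ^ j * (1 - t)) (2 ^ j * -1) t :=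
    ((hasDerivAt_id t).const_sub 1).const_mul _
  exact ((unitBump.contDiff (n := 1)).differentiable one_ne_zero _).hasDerivAt.comp t hinner

theorem contDiff_dyadicBump (j : ℕ) : ContDiff ℝ 1 (dyadicBump j) :=
  unitBump.contDiff.comp (contDiff_const.mul (contDiff_const.sub contDiff_id))

theorem exists_abs_deriv_dyadicBump_le : ∃ C, ∀ j t, |deriv (dyadicBump j) t| ≤ C * 2 ^ j := by
  obtain ⟨C, hC⟩ := unitBump.hasCompactSupport.deriv.exists_bound_of_continuous
    (unitBump.contDiff.continuous_deriv le_rfl)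
  refine ⟨C, fun j t => ?_⟩
  rw [(hasDerivAt_dyadicBump j t).deriv, abs_mul]
  simpa using mul_le_mul_of_nonneg_right (hC _) (by positivity : (0 : ℝ) ≤ 2 ^ j)

variable {E : Type*} [NormedAddCommGroup E] [NormedSpace ℝ E]

def dyadicSeries (w : ℕ → E) (t : ℝ) : E := ∑' j, dyadicBump j t • w j

theorem dyadicSeries_one (w : ℕ → E) : dyadicSeries w 1 = 0 := by
  simp [dyadicSeries, dyadicBump_one]

theorem dyadicSeries_one_sub_inv_two_pow (w : ℕ → E) (k : ℕ) :
    dyadicSeries w (1 - 2⁻¹ ^ k) = w k := by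
  rw [dyadicSeries, tsum_eq_single k fun j hjk => by rw [dyadicBump_of_ne hjk, zero_smul],
    dyadicBump_self, one_smul]

theorem contDiff_dyadicSeries [CompleteSpace E] {w : ℕ → E}
    (hw : Summable fun j => 2 ^ j * ‖w j‖) : ContDiff ℝ 1 (dyadicSeries w) := by
  obtain ⟨C, hC⟩ := exists_abs_deriv_dyadicBump_le
  refine contDiff_tsum (v := fun _ j => max 1 C * (2 ^ j * ‖w j‖))
    (fun j => (contDiff_dyadicBump j).smul contDiff_const) (fun _ _ => hw.mul_left _) ?_
  intro k j t hk
  have hk : k = 0 ∨ k = 1 := by norm_cast at hk; omega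
  rcases hk with rfl | rfl
  · rw [norm_iteratedFDeriv_zero, norm_smul, ← mul_assoc]
    have hb : ‖dyadicBump j t‖ ≤ max 1 C * 2 ^ j := calc
      ‖dyadicBump j t‖ ≤ 1 := abs_dyadicBump_le_one j t
      _ ≤ max 1 C * 2 ^ j :=
        one_le_mul_of_one_le_of_one_le (le_max_left _ _) (one_le_pow₀ one_le_two)
    gcongr
  · rw [norm_iteratedFDeriv_one, ← norm_deriv_eq_norm_fderiv,
      deriv_smul_const ((contDiff_dyadicBump j).differentiable one_ne_zero t), norm_smul,
      ← mul_assoc]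
    have hb : ‖deriv (dyadicBump j) t‖ ≤ max 1 C * 2 ^ j :=
      (hC j t).trans (by gcongr; exact le_max_right _ _)
    gcongr

theorem exists_contDiff_curve_through_subseq [CompleteSpace E] {p : E} {x : ℕ → E}
    (hx : Tendsto x atTop (𝓝 p)) :
    ∃ γ : ℝ → E, ∃ φ : ℕ → ℕ, StrictMono φ ∧ ContDiff ℝ 1 γ ∧ γ 1 = p ∧
      ∀ k, γ (1 - 2⁻¹ ^ k) = x (φ k) := by
  obtain ⟨φ, hφ, hφx⟩ : ∃ φ : ℕ → ℕ, StrictMono φ ∧ ∀ k, ‖x (φ k) - p‖ ≤ 4⁻¹ ^ k :=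
    extraction_forall_of_eventually (P := fun k n => ‖x n - p‖ ≤ 4⁻¹ ^ k) fun k =>
      (Metric.tendsto_nhds.1 hx (4⁻¹ ^ k) (by positivity)).mono fun n hn => by
        rw [← dist_eq_norm]; exact hn.le
  have hsum : Summable fun k => 2 ^ k * ‖x (φ k) - p‖ := by
    refine summable_geometric_two.of_nonneg_of_le (fun k => by positivity) fun k => ?_
    calc 2 ^ k * ‖x (φ k) - p‖ ≤ 2 ^ k * 4⁻¹ ^ k := by gcongr; exact hφx k
      _ = (1 / 2) ^ k := by rw [← mul_pow]; norm_num
  refine ⟨fun t => p + dyadicSeries (fun k => x (φ k) - p) t, φ, hφ,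
    contDiff_const.add (contDiff_dyadicSeries hsum), by simp [dyadicSeries_one], fun k => ?_⟩
  simp only [dyadicSeries_one_sub_inv_two_pow, add_sub_cancel]

end

/-- Through the limit `p` of a convergent sequence `(pₙ)` in `ℝ³` and infinitely many of its
terms, one can pass a curve of class `C¹` on `[0,1]` ending at `p`. -/
theorem exists_C1_curve_through_infinitely_many_points
    (p : EuclideanSpace ℝ (Fin 3)) (pseq : ℕ → EuclideanSpace ℝ (Fin 3))
    (hconv : Filter.Tendsto pseq Filter.atTop (nhds p)) :
    ∃ γ : ℝ → EuclideanSpace ℝ (Fin 3), ∃ S : Set ℕ, S.Infinite ∧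
      ContDiffOn ℝ 1 γ (Set.Icc 0 1) ∧ γ 1 = p ∧
      ∀ n ∈ S, ∃ s ∈ Set.Icc (0:ℝ) 1, γ s = pseq n := by
  obtain ⟨γ, φ, hφ, hγ, hγ1, hγφ⟩ := exists_contDiff_curve_through_subseq hconv
  refine ⟨γ, range φ, infinite_range_of_injective hφ.injective, hγ.contDiffOn, hγ1, ?_⟩
  rintro _ ⟨k, rfl⟩
  have hpow : (2⁻¹ : ℝ) ^ k ∈ Icc 0 1 := ⟨by positivity, pow_le_one₀ (by norm_num) (by norm_num)⟩
  exact ⟨1 - 2⁻¹ ^ k, ⟨by linarith [hpow.2], by linarith [hpow.1]⟩, hγφ k⟩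
end

section
/- Let V and W be open subsets of Euclidean space ℝ³, let p ∈ V, let ξ be a 2-dimensional linear subspace of ℝ³, and let h : V → W be a C¹-diffeomorphism (h is a bijection from V to W, continuously differentiable on V, with invertible derivative Dh_p at p). Write π for the orthogonal projection of ℝ³ onto the orthogonal complement ξ^⊥, and π' for the orthogonal projection of ℝ³ onto the orthogonal complement of the 2-plane Dh_p(ξ). Then for every ε with 0 < ε < π/2 there exists δ with 0 < δ < π/2 such that for any two distinct points p', p'' ∈ V with dist(p,p') < δ, dist(p,p'') < δ and ‖π(p'' − p')‖ < sin(δ)·‖p'' − p'‖, one has ‖π'(h(p'') − h(p'))‖ < sin(ε)·‖h(p'') − h(p')‖. -/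
/-!
The chord `v = p'' - p'` is mapped to `w = h p'' - h p'`, and strict differentiability of `h` at
`p` (which follows from `C¹`) makes `‖w - Dh v‖` small compared with `‖v‖` once both points are
close to `p`. Projecting onto `(Dh ξ)ᗮ` kills the image of the `ξ`-component of `v`, so the
projection of `w` is bounded by `‖Dh‖` times the projection of `v` onto `ξᗮ` plus that error,
while `‖w‖` stays comparable to `‖v‖` because `Dh` is invertible.
-/

open Submodule

variable {E F : Type*} [NormedAddCommGroup E] [InnerProductSpace ℝ E]
  [NormedAddCommGroup F] [InnerProductSpace ℝ F]

theorem norm_starProjection_orthogonal_map_apply_le (f : E →L[ℝ] F) (K : Submodule ℝ E)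
    [K.HasOrthogonalProjection] [(K.map (f : E →ₗ[ℝ] F)).HasOrthogonalProjection] (v : E) :
    ‖(K.map (f : E →ₗ[ℝ] F))ᗮ.starProjection (f v)‖ ≤ ‖f‖ * ‖Kᗮ.starProjection v‖ := by
  set L := K.map (f : E →ₗ[ℝ] F)
  have hmem : f (K.starProjection v) ∈ L := mem_map_of_mem (K.starProjection_apply_mem v)
  have hsplit : f v = f (K.starProjection v) + f (Kᗮ.starProjection v) := by
    rw [← map_add, starProjection_add_starProjection_orthogonal]
  calc ‖Lᗮ.starProjection (f v)‖ = ‖Lᗮ.starProjection (f (Kᗮ.starProjection v))‖ := by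
        rw [hsplit, map_add, starProjection_orthogonal_apply_eq_zero hmem, zero_add]
    _ ≤ ‖f (Kᗮ.starProjection v)‖ := norm_starProjection_apply_le _ _
    _ ≤ ‖f‖ * ‖Kᗮ.starProjection v‖ := f.le_opNorm _

theorem norm_starProjection_orthogonal_map_le_of_norm_sub_le (f : E →L[ℝ] F)
    (K : Submodule ℝ E) [K.HasOrthogonalProjection]
    [(K.map (f : E →ₗ[ℝ] F)).HasOrthogonalProjection] {v : E} {w : F} {η : ℝ}
    (hw : ‖w - f v‖ ≤ η) :
    ‖(K.map (f : E →ₗ[ℝ] F))ᗮ.starProjection w‖ ≤ ‖f‖ * ‖Kᗮ.starProjection v‖ + η := by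
  set P := (K.map (f : E →ₗ[ℝ] F))ᗮ.starProjection
  calc ‖P w‖ = ‖P (f v) + P (w - f v)‖ := by rw [← map_add, add_sub_cancel]
    _ ≤ ‖P (f v)‖ + ‖P (w - f v)‖ := norm_add_le _ _
    _ ≤ ‖f‖ * ‖Kᗮ.starProjection v‖ + η :=
        add_le_add (norm_starProjection_orthogonal_map_apply_le f K v)
          ((norm_starProjection_apply_le _ _).trans hw)

theorem ContinuousLinearEquiv.norm_le_norm_symm_mul_add (A : E ≃L[ℝ] F) (v : E) (w : F) :
    ‖v‖ ≤ ‖(A.symm : F →L[ℝ] E)‖ * (‖w‖ + ‖w - A v‖) :=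
  calc ‖v‖ = ‖(A.symm : F →L[ℝ] E) (A v)‖ := by simp
    _ ≤ ‖(A.symm : F →L[ℝ] E)‖ * ‖A v‖ := ContinuousLinearMap.le_opNorm _ _
    _ ≤ ‖(A.symm : F →L[ℝ] E)‖ * (‖w‖ + ‖w - A v‖) := by
        gcongr
        simpa using norm_sub_le w (w - A v)

theorem ContinuousLinearEquiv.exists_pos_norm_starProjection_orthogonal_map_lt (A : E ≃L[ℝ] F)
    (K : Submodule ℝ E) [K.HasOrthogonalProjection]
    [(K.map ((A : E →L[ℝ] F) : E →ₗ[ℝ] F)).HasOrthogonalProjection] {σ : ℝ} (hσ : 0 < σ) :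
    ∃ κ > 0, ∀ (v : E) (w : F), v ≠ 0 → ‖w - A v‖ ≤ κ * ‖v‖ →
      ‖Kᗮ.starProjection v‖ ≤ κ * ‖v‖ →
      ‖(K.map ((A : E →L[ℝ] F) : E →ₗ[ℝ] F))ᗮ.starProjection w‖ < σ * ‖w‖ := by
  set M := ‖(A : E →L[ℝ] F)‖
  set c := ‖(A.symm : F →L[ℝ] E)‖ + 1
  set τ := σ / (1 + σ)
  have hc : 0 < c := by positivity
  have hτ : 0 < τ := by positivity
  have hτσ : τ < σ := div_lt_self hσ (by linarith)
  have hτ1 : τ < 1 := (div_lt_one (by linarith)).2 (by linarith)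
  refine ⟨τ / (2 * c * (M + 1)), by positivity, fun v w hv hw hb => ?_⟩
  set κ := τ / (2 * c * (M + 1))
  have hcκ : c * κ ≤ 1 / 2 := by
    rw [mul_div_assoc', div_le_iff₀ (by positivity)]
    nlinarith [norm_nonneg (A : E →L[ℝ] F)]
  have hκ : 2 * c * (M + 1) * κ = τ := mul_div_cancel₀ _ (by positivity)
  have hv_pos : 0 < ‖v‖ := norm_pos_iff.2 hv
  have hup := norm_starProjection_orthogonal_map_le_of_norm_sub_le (A : E →L[ℝ] F) K hw
  have hlow : ‖v‖ ≤ c * (‖w‖ + κ * ‖v‖) :=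
    (A.norm_le_norm_symm_mul_add v w).trans (by gcongr; linarith)
  -- since `c κ ≤ 1/2`, the lower bound absorbs its own error term
  have hvw : ‖v‖ ≤ 2 * c * ‖w‖ := by nlinarith [mul_le_mul_of_nonneg_right hcκ hv_pos.le]
  have hw_pos : 0 < ‖w‖ := by nlinarith
  calc _ ≤ M * (κ * ‖v‖) + κ * ‖v‖ := hup.trans (by gcongr)
    _ = (M + 1) * κ * ‖v‖ := by ring
    _ ≤ (M + 1) * κ * (2 * c * ‖w‖) := by gcongr
    _ = τ * ‖w‖ := by rw [← hκ]; ring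
    _ < σ * ‖w‖ := by gcongr

theorem angle_condition_coordinate_invariance_general
    (V : Set (EuclideanSpace ℝ (Fin 3))) (hV : IsOpen V)
    (p : EuclideanSpace ℝ (Fin 3)) (hp : p ∈ V)
    (ξ : Submodule ℝ (EuclideanSpace ℝ (Fin 3)))
    (h : EuclideanSpace ℝ (Fin 3) → EuclideanSpace ℝ (Fin 3))
    (hC1 : ContDiffOn ℝ 1 h V)
    (Dh : EuclideanSpace ℝ (Fin 3) ≃L[ℝ] EuclideanSpace ℝ (Fin 3))
    (hDh : HasFDerivAt h (Dh : EuclideanSpace ℝ (Fin 3) →L[ℝ] EuclideanSpace ℝ (Fin 3)) p) :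
    ∀ ε : ℝ, 0 < ε → ε < Real.pi / 2 → ∃ δ : ℝ, 0 < δ ∧ δ < Real.pi / 2 ∧
      ∀ p' ∈ V, ∀ p'' ∈ V, p' ≠ p'' → dist p p' < δ → dist p p'' < δ →
        ‖(Submodule.orthogonalProjectionOnto ξᗮ (p'' - p') : EuclideanSpace ℝ (Fin 3))‖ <
          Real.sin δ * ‖p'' - p'‖ →
        ‖(Submodule.orthogonalProjectionOnto
            (Submodule.map ((Dh : EuclideanSpace ℝ (Fin 3) →L[ℝ] EuclideanSpace ℝ (Fin 3)) :
              EuclideanSpace ℝ (Fin 3) →ₗ[ℝ] EuclideanSpace ℝ (Fin 3)) ξ)ᗮ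
            (h p'' - h p') : EuclideanSpace ℝ (Fin 3))‖ <
          Real.sin ε * ‖h p'' - h p'‖ := by
  intro ε hε hεπ
  obtain ⟨κ, hκ, hstable⟩ := Dh.exists_pos_norm_starProjection_orthogonal_map_lt ξ
    (Real.sin_pos_of_pos_of_lt_pi hε (by linarith [Real.pi_pos]))
  have hstrict : HasStrictFDerivAt h (Dh : EuclideanSpace ℝ (Fin 3) →L[ℝ] _) p :=
    (hC1.contDiffAt (hV.mem_nhds hp)).hasStrictFDerivAt' hDh one_ne_zero
  obtain ⟨s, hs, happrox⟩ := hstrict.approximates_deriv_on_nhds (c := ⟨κ, hκ.le⟩) (Or.inr hκ)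
  obtain ⟨r, hr, hball⟩ := Metric.mem_nhds_iff.1 hs
  have hδ : 0 < min (min ε r) κ := by positivity
  refine ⟨min (min ε r) κ, hδ, ((min_le_left _ _).trans (min_le_left _ _)).trans_lt hεπ, ?_⟩
  intro p' _ p'' _ hne hp' hp'' hproj
  have hmem : ∀ x, dist p x < min (min ε r) κ → x ∈ s := fun x hx => by
    rw [dist_comm] at hx
    exact hball (hx.trans_le ((min_le_left _ _).trans (min_le_right _ _)))
  refine hstable (p'' - p') (h p'' - h p') (sub_ne_zero.2 hne.symm)
    (happrox p'' (hmem _ hp'') p' (hmem _ hp')) (hproj.le.trans ?_)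
  gcongr
  exact (Real.sin_le hδ.le).trans (min_le_right _ _)

/-- Independence of the Legendrian condition of the choice of `C¹` Euclidean coordinates:
if `h : V → W` is a `C¹`-diffeomorphism with derivative `Dh` at `p`, `ξ` is a 2-plane, and
`π`, `π'` are the orthogonal projections onto `ξᗮ` and `(Dh p ξ)ᗮ`, then for every
`ε ∈ (0, π/2)` there is `δ ∈ (0, π/2)` such that near-`ξ`-tangent chords near `p` are mapped
to near-`Dh(ξ)`-tangent chords. -/
theorem angle_condition_coordinate_invariance
    (V W : Set (EuclideanSpace ℝ (Fin 3))) (hV : IsOpen V) (hW : IsOpen W)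
    (p : EuclideanSpace ℝ (Fin 3)) (hp : p ∈ V)
    (ξ : Submodule ℝ (EuclideanSpace ℝ (Fin 3))) (hξ : Module.finrank ℝ ξ = 2)
    (h : EuclideanSpace ℝ (Fin 3) → EuclideanSpace ℝ (Fin 3))
    (hbij : Set.BijOn h V W) (hC1 : ContDiffOn ℝ 1 h V)
    (Dh : EuclideanSpace ℝ (Fin 3) ≃L[ℝ] EuclideanSpace ℝ (Fin 3))
    (hDh : HasFDerivAt h (Dh : EuclideanSpace ℝ (Fin 3) →L[ℝ] EuclideanSpace ℝ (Fin 3)) p) :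
    ∀ ε : ℝ, 0 < ε → ε < Real.pi / 2 → ∃ δ : ℝ, 0 < δ ∧ δ < Real.pi / 2 ∧
      ∀ p' ∈ V, ∀ p'' ∈ V, p' ≠ p'' → dist p p' < δ → dist p p'' < δ →
        ‖(Submodule.orthogonalProjectionOnto ξᗮ (p'' - p') : EuclideanSpace ℝ (Fin 3))‖ <
          Real.sin δ * ‖p'' - p'‖ →
        ‖(Submodule.orthogonalProjectionOnto
            (Submodule.map ((Dh : EuclideanSpace ℝ (Fin 3) →L[ℝ] EuclideanSpace ℝ (Fin 3)) :
              EuclideanSpace ℝ (Fin 3) →ₗ[ℝ] EuclideanSpace ℝ (Fin 3)) ξ)ᗮ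
            (h p'' - h p') : EuclideanSpace ℝ (Fin 3))‖ <
          Real.sin ε * ‖h p'' - h p'‖ :=
  angle_condition_coordinate_invariance_general V hV p hp ξ h hC1 Dh hDh
end

section
/- Let a, b ∈ ℝ with a > 0, and let γ : ℝ → ℂ be the logarithmic spiral γ(u) = exp((a + b·i)·u). Then there exists a real number C ≥ 1 such that for all real s ≤ t, ∫ₛᵗ ‖(a + b·i)·exp((a + b·i)·u)‖ du ≤ C·‖γ(t) − γ(s)‖; equivalently, (√(a² + b²)/a)·(e^{a t} − e^{a s}) ≤ C·‖exp((a+b·i)t) − exp((a+b·i)s)‖. -/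
/-!
For `z` with `Re z > 0`, the speed of `u ↦ exp (z u)` is `‖z‖ e^{u Re z}`, so the arc over `[s, t]`
has length `(‖z‖ / Re z)(e^{t Re z} - e^{s Re z})`. The bracket is the difference of the moduli
of the endpoints, hence at most the chord, and `C = ‖z‖ / Re z ≥ 1` works.
-/

open Complex

namespace Complex

lemma norm_exp_mul_ofReal (z : ℂ) (u : ℝ) : ‖exp (z * u)‖ = Real.exp (z.re * u) := by
  rw [norm_exp, mul_re, ofReal_re, ofReal_im, mul_zero, sub_zero]

lemma integral_norm_mul_exp_mul_ofReal {z : ℂ} (hz : z.re ≠ 0) (s t : ℝ) :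
    ∫ u in s..t, ‖z * exp (z * u)‖ =
      ‖z‖ / z.re * (Real.exp (z.re * t) - Real.exp (z.re * s)) := by
  simp only [norm_mul, norm_exp_mul_ofReal]
  rw [intervalIntegral.integral_const_mul,
    intervalIntegral.integral_comp_mul_left Real.exp hz, integral_exp, smul_eq_mul]
  ring

lemma exp_re_mul_sub_le_norm_exp_mul_sub (z : ℂ) (s t : ℝ) :
    Real.exp (z.re * t) - Real.exp (z.re * s) ≤ ‖exp (z * t) - exp (z * s)‖ := by
  rw [← norm_exp_mul_ofReal, ← norm_exp_mul_ofReal]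
  exact norm_sub_norm_le _ _

lemma one_le_norm_div_re {z : ℂ} (hz : 0 < z.re) : 1 ≤ ‖z‖ / z.re := by
  rw [one_le_div hz]
  exact re_le_norm z

lemma integral_norm_mul_exp_mul_ofReal_le {z : ℂ} (hz : 0 < z.re) (s t : ℝ) :
    ∫ u in s..t, ‖z * exp (z * u)‖ ≤ ‖z‖ / z.re * ‖exp (z * t) - exp (z * s)‖ := by
  rw [integral_norm_mul_exp_mul_ofReal hz.ne']
  gcongr
  exact exp_re_mul_sub_le_norm_exp_mul_sub z s t

end Complex

/-- Logarithmic spirals are Lavrentiev (chord-arc) curves: for `γ(u) = exp((a+bi)u)` with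
`a > 0` there is `C ≥ 1` bounding the arclength of every subarc by `C` times the distance
between its endpoints. -/
theorem logarithmic_spiral_is_lavrentiev (a b : ℝ) (ha : 0 < a) :
    ∃ C : ℝ, 1 ≤ C ∧ ∀ s t : ℝ, s ≤ t →
      (∫ u in s..t, ‖((a : ℂ) + (b : ℂ) * Complex.I) *
          Complex.exp (((a : ℂ) + (b : ℂ) * Complex.I) * (u : ℂ))‖) ≤
        C * ‖Complex.exp (((a : ℂ) + (b : ℂ) * Complex.I) * (t : ℂ)) -
          Complex.exp (((a : ℂ) + (b : ℂ) * Complex.I) * (s : ℂ))‖ := by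
  have hre : (0 : ℝ) < ((a : ℂ) + (b : ℂ) * I).re := by simpa using ha
  exact ⟨_, one_le_norm_div_re hre, fun s t _ => integral_norm_mul_exp_mul_ofReal_le hre s t⟩
end

section
/- Define f : ℂ → ℂ by f(0) = 0 and f(w) = w·exp(i·log‖w‖) for w ≠ 0, where log is the real natural logarithm and i is the imaginary unit. Then f is a bijection of ℂ and there exists a real number C ≥ 1 such that (1/C)·‖w − w'‖ ≤ ‖f(w) − f(w')‖ ≤ C·‖w − w'‖ for all w, w' ∈ ℂ. -/
/-!
The twist `w ↦ w · exp(i ε log ‖w‖)` preserves `‖w‖`, and its inverse is the twist with `-ε`,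
so it suffices to show that every twist is `(1 + |ε|)`-Lipschitz. For `‖w'‖ = b ≤ a = ‖w‖` the
two rotation angles differ by `|ε| log (a / b)`, and moving `w'` through that angle on its circle
costs at most `b |ε| log (a / b) ≤ |ε| (a - b) ≤ |ε| ‖w - w'‖`.
-/

open Complex

-- No case split at `0` is needed: the factor `w` absorbs the junk value `Real.log 0 = 0`.
noncomputable def twist (ε : ℝ) (w : ℂ) : ℂ :=
  w * exp (I * (ε * Real.log ‖w‖ : ℝ))

lemma norm_twist (ε : ℝ) (w : ℂ) : ‖twist ε w‖ = ‖w‖ := by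
  rw [twist, norm_mul, norm_exp_I_mul_ofReal, mul_one]

lemma twist_neg_twist (ε : ℝ) (w : ℂ) : twist (-ε) (twist ε w) = w := by
  rw [twist, norm_twist, twist, mul_assoc, ← exp_add]
  push_cast
  ring_nf
  rw [exp_zero, mul_one]

noncomputable def twistEquiv (ε : ℝ) : ℂ ≃ ℂ where
  toFun := twist ε
  invFun := twist (-ε)
  left_inv := twist_neg_twist ε
  right_inv w := by simpa using twist_neg_twist (-ε) w

lemma norm_exp_I_mul_sub_exp_I_mul_le (s t : ℝ) :
    ‖exp (I * s) - exp (I * t)‖ ≤ |s - t| := by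
  have hfactor : exp (I * s) - exp (I * t) = exp (I * t) * (exp (I * (s - t : ℝ)) - 1) := by
    rw [mul_sub, mul_one, ← exp_add]
    push_cast
    ring_nf
  rw [hfactor, norm_mul, norm_exp_I_mul_ofReal, one_mul]
  exact Real.norm_exp_I_mul_ofReal_sub_one_le

lemma mul_abs_log_sub_log_le_sub {a b : ℝ} (hb : 0 ≤ b) (hba : b ≤ a) :
    b * |Real.log a - Real.log b| ≤ a - b := by
  rcases hb.eq_or_lt with rfl | hb
  · simpa using hba
  rw [abs_of_nonneg (sub_nonneg.2 (Real.log_le_log hb hba))]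
  have hlog : Real.log a - Real.log b ≤ a / b - 1 := by
    rw [← Real.log_div (hb.trans_le hba).ne' hb.ne']
    exact Real.log_le_sub_one_of_pos (div_pos (hb.trans_le hba) hb)
  calc b * (Real.log a - Real.log b) ≤ b * (a / b - 1) := by gcongr
    _ = a - b := by field_simp

lemma norm_twist_sub_twist_le (ε : ℝ) (w w' : ℂ) :
    ‖twist ε w - twist ε w'‖ ≤ (1 + |ε|) * ‖w - w'‖ := by
  wlog hle : ‖w'‖ ≤ ‖w‖ generalizing w w'
  · rw [norm_sub_rev, norm_sub_rev w]
    exact this w' w (le_of_not_ge hle)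
  set E : ℂ → ℂ := fun z => exp (I * (ε * Real.log ‖z‖ : ℝ))
  have hsplit : twist ε w - twist ε w' = (w - w') * E w + w' * (E w - E w') := by
    simp only [twist, E]
    ring
  have hangle : ‖w'‖ * ‖E w - E w'‖ ≤ |ε| * (‖w‖ - ‖w'‖) := by
    calc ‖w'‖ * ‖E w - E w'‖
        ≤ ‖w'‖ * |ε * Real.log ‖w‖ - ε * Real.log ‖w'‖| := by
          gcongr
          exact norm_exp_I_mul_sub_exp_I_mul_le _ _
      _ = |ε| * (‖w'‖ * |Real.log ‖w‖ - Real.log ‖w'‖|) := by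
          rw [← mul_sub, abs_mul]
          ring
      _ ≤ |ε| * (‖w‖ - ‖w'‖) := by
          gcongr
          exact mul_abs_log_sub_log_le_sub (norm_nonneg _) hle
  calc ‖twist ε w - twist ε w'‖ ≤ ‖w - w'‖ * ‖E w‖ + ‖w'‖ * ‖E w - E w'‖ := by
        rw [hsplit, ← norm_mul, ← norm_mul]
        exact norm_add_le _ _
    _ ≤ ‖w - w'‖ + |ε| * (‖w‖ - ‖w'‖) := by
        rw [norm_exp_I_mul_ofReal, mul_one]
        exact add_le_add_right hangle _
    _ ≤ ‖w - w'‖ + |ε| * ‖w - w'‖ := by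
        gcongr
        exact norm_sub_norm_le w w'
    _ = (1 + |ε|) * ‖w - w'‖ := by ring

lemma norm_sub_le_mul_norm_twist_sub_twist (ε : ℝ) (w w' : ℂ) :
    ‖w - w'‖ ≤ (1 + |ε|) * ‖twist ε w - twist ε w'‖ := by
  simpa [twist_neg_twist] using norm_twist_sub_twist_le (-ε) (twist ε w) (twist ε w')

/-- The planar twist map `(ρ, φ) ↦ (ρ, φ + ln ρ)`, i.e. `w ↦ w·exp(i·log‖w‖)` (and `0 ↦ 0`). -/
noncomputable def planarTwist (w : ℂ) : ℂ :=
  if w = 0 then 0 else w * Complex.exp (Complex.I * (Real.log ‖w‖ : ℂ))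

lemma planarTwist_eq_twist_one : planarTwist = twist 1 := by
  funext w
  by_cases hw : w = 0 <;> simp [planarTwist, twist, hw]

/-- The twist map `w ↦ w·exp(i·log‖w‖)` is a bi-Lipschitz bijection of the plane. -/
theorem planarTwist_bijective_biLipschitz :
    Function.Bijective planarTwist ∧
    ∃ C : ℝ, 1 ≤ C ∧ ∀ w w' : ℂ,
      (1 / C) * ‖w - w'‖ ≤ ‖planarTwist w - planarTwist w'‖ ∧
        ‖planarTwist w - planarTwist w'‖ ≤ C * ‖w - w'‖ := by
  rw [planarTwist_eq_twist_one]
  refine ⟨(twistEquiv 1).bijective, 2, by norm_num, fun w w' => ⟨?_, ?_⟩⟩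
  · have h := norm_sub_le_mul_norm_twist_sub_twist 1 w w'
    rw [abs_one, one_add_one_eq_two] at h
    linarith
  · simpa [one_add_one_eq_two] using norm_twist_sub_twist_le 1 w w'
end

section
/- Let n ∈ ℕ and let γ : [0,1] → ℝⁿ be continuously differentiable on [0,1], injective on [0,1], with γ'(u) ≠ 0 for every u ∈ [0,1]. Then there exists a real number C ≥ 1 such that for all s, t ∈ [0,1] with s ≤ t, the arclength of γ over [s,t] satisfies ∫ₛᵗ ‖γ'(u)‖ du ≤ C·‖γ(t) − γ(s)‖. -/
open Set MeasureTheory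

/-- A compact embedded regular `C¹` arc in `ℝⁿ` is a Lavrentiev (chord-arc) curve: there is
`C ≥ 1` such that the arclength of any subarc is at most `C` times the distance between its
endpoints. -/
theorem C1_arc_is_lavrentiev
    (n : ℕ) (γ γ' : ℝ → EuclideanSpace ℝ (Fin n))
    (hderiv : ∀ u ∈ Set.Icc (0:ℝ) 1, HasDerivWithinAt γ (γ' u) (Set.Icc 0 1) u)
    (hcont : ContinuousOn γ' (Set.Icc 0 1))
    (hne : ∀ u ∈ Set.Icc (0:ℝ) 1, γ' u ≠ 0)
    (hinj : Set.InjOn γ (Set.Icc 0 1)) :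
    ∃ C : ℝ, 1 ≤ C ∧ ∀ s ∈ Set.Icc (0:ℝ) 1, ∀ t ∈ Set.Icc (0:ℝ) 1, s ≤ t →
      (∫ u in s..t, ‖γ' u‖) ≤ C * ‖γ t - γ s‖ := by
  have h01 : (0:ℝ) ∈ Icc (0:ℝ) 1 := by norm_num
  have hγc : ContinuousOn γ (Icc 0 1) := fun u hu => (hderiv u hu).continuousWithinAt
  have hIcc : IsCompact (Icc (0:ℝ) 1) := isCompact_Icc
  -- minimum m > 0 and maximum M of ‖γ'‖
  obtain ⟨um, hum, hm'⟩ := hIcc.exists_isMinOn ⟨0, h01⟩ hcont.norm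
  have hm := isMinOn_iff.mp hm'
  set m := ‖γ' um‖ with hmdef
  have hm0 : 0 < m := norm_pos_iff.mpr (hne um hum)
  obtain ⟨uM, huM, hM'⟩ := hIcc.exists_isMaxOn ⟨0, h01⟩ hcont.norm
  have hM := isMaxOn_iff.mp hM'
  set M := ‖γ' uM‖ with hMdef
  have hmM : m ≤ M := le_trans (hm 0 h01) (hM 0 h01)
  have hM0 : 0 < M := lt_of_lt_of_le hm0 hmM
  -- uniform continuity of γ'
  have hUC := hIcc.uniformContinuousOn_of_continuous hcont
  rw [Metric.uniformContinuousOn_iff] at hUC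
  obtain ⟨δ, hδ0, hδ⟩ := hUC (m/2) (by positivity)
  set δ' := min (δ/2) 1 with hδ'def
  have hδ'0 : 0 < δ' := lt_min (by positivity) one_pos
  have hδ'1 : δ' ≤ 1 := min_le_right _ _
  have hδ'δ : δ' < δ := lt_of_le_of_lt (min_le_left _ _) (by linarith)
  -- arclength upper bound
  have harc : ∀ s ∈ Icc (0:ℝ) 1, ∀ t ∈ Icc (0:ℝ) 1, s ≤ t →
      (∫ u in s..t, ‖γ' u‖) ≤ M * (t - s) := by
    intro s hs t ht hst
    have h1 : ‖∫ u in s..t, ‖γ' u‖‖ ≤ M * |t - s| := by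
      apply intervalIntegral.norm_integral_le_of_norm_le_const
      intro x hx
      rw [uIoc_of_le hst] at hx
      have hx01 : x ∈ Icc (0:ℝ) 1 := ⟨le_trans hs.1 hx.1.le, le_trans hx.2 ht.2⟩
      simpa using hM x hx01
    calc (∫ u in s..t, ‖γ' u‖) ≤ ‖∫ u in s..t, ‖γ' u‖‖ := le_abs_self _
      _ ≤ M * |t - s| := h1
      _ = M * (t - s) := by rw [abs_of_nonneg (by linarith)]
  -- near-diagonal chord lower bound
  have key : ∀ s ∈ Icc (0:ℝ) 1, ∀ t ∈ Icc (0:ℝ) 1, s ≤ t → t - s ≤ δ' →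
      (t - s) * (m/2) ≤ ‖γ t - γ s‖ := by
    intro s hs t ht hst hclose
    have hsub : Icc s t ⊆ Icc (0:ℝ) 1 := Icc_subset_Icc hs.1 ht.2
    have hsubu : uIcc s t ⊆ Icc (0:ℝ) 1 := by rw [uIcc_of_le hst]; exact hsub
    have hint : IntervalIntegrable γ' volume s t := (hcont.mono hsubu).intervalIntegrable
    have hftc : ∫ u in s..t, γ' u = γ t - γ s := by
      apply intervalIntegral.integral_eq_sub_of_hasDeriv_right_of_le hst (hγc.mono hsub) _ hint
      intro x hx
      have hx01 : x ∈ Ioo (0:ℝ) 1 := ⟨lt_of_le_of_lt hs.1 hx.1, lt_of_lt_of_le hx.2 ht.2⟩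
      have : HasDerivAt γ (γ' x) x :=
        (hderiv x (Ioo_subset_Icc_self hx01)).hasDerivAt (Icc_mem_nhds hx01.1 hx01.2)
      exact this.hasDerivWithinAt
    have hdint : IntervalIntegrable (fun u => γ' u - γ' s) volume s t :=
      hint.sub intervalIntegrable_const
    have hsplit : γ t - γ s = (∫ u in s..t, (γ' u - γ' s)) + (t - s) • γ' s := by
      rw [← hftc, intervalIntegral.integral_sub hint intervalIntegrable_const,
        intervalIntegral.integral_const]
      abel
    have hbound : ‖∫ u in s..t, (γ' u - γ' s)‖ ≤ (m/2) * |t - s| := by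
      apply intervalIntegral.norm_integral_le_of_norm_le_const
      intro x hx
      rw [uIoc_of_le hst] at hx
      have hx01 : x ∈ Icc (0:ℝ) 1 := ⟨le_trans hs.1 hx.1.le, le_trans hx.2 ht.2⟩
      have hdist : dist x s < δ := by
        rw [Real.dist_eq, abs_of_nonneg (by linarith [hx.1.le])]
        linarith [hx.2]
      have := hδ x hx01 s hs hdist
      rw [dist_eq_norm] at this
      exact this.le
    have hnorm : ‖(t - s) • γ' s‖ = (t - s) * ‖γ' s‖ := by
      rw [norm_smul, Real.norm_eq_abs, abs_of_nonneg (by linarith)]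
    calc (t - s) * (m/2)
        = (t - s) * m - (m/2) * (t - s) := by ring
      _ ≤ (t - s) * ‖γ' s‖ - ‖∫ u in s..t, (γ' u - γ' s)‖ := by
          have h1 : (t - s) * m ≤ (t - s) * ‖γ' s‖ :=
            mul_le_mul_of_nonneg_left (hm s hs) (by linarith)
          have h2 : ‖∫ u in s..t, (γ' u - γ' s)‖ ≤ (m/2) * (t - s) := by
            rwa [abs_of_nonneg (by linarith : (0:ℝ) ≤ t - s)] at hbound
          linarith
      _ ≤ ‖γ t - γ s‖ := by
          rw [hsplit, ← hnorm]
          have h3 := norm_le_add_norm_add' (∫ u in s..t, (γ' u - γ' s)) ((t - s) • γ' s)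
          linarith
  -- far-from-diagonal chord lower bound via compactness
  set K := (Icc (0:ℝ) 1 ×ˢ Icc (0:ℝ) 1) ∩ {p : ℝ × ℝ | p.1 + δ' ≤ p.2} with hKdef
  have hKc : IsCompact K := (hIcc.prod hIcc).inter_right
    (isClosed_le (continuous_fst.add continuous_const) continuous_snd)
  have hKne : K.Nonempty := by
    refine ⟨(0, δ'), ⟨⟨h01, ⟨hδ'0.le, hδ'1⟩⟩, ?_⟩⟩
    simp
  have hKcont : ContinuousOn (fun p : ℝ × ℝ => ‖γ p.2 - γ p.1‖) K := by
    apply ContinuousOn.norm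
    apply ContinuousOn.sub
    · exact hγc.comp continuous_snd.continuousOn (fun p hp => hp.1.2)
    · exact hγc.comp continuous_fst.continuousOn (fun p hp => hp.1.1)
  obtain ⟨p₀, hp₀K, hp₀'⟩ := hKc.exists_isMinOn hKne hKcont
  have hp₀ := isMinOn_iff.mp hp₀'
  set ε := ‖γ p₀.2 - γ p₀.1‖ with hεdef
  have hε0 : 0 < ε := by
    rw [hεdef, norm_pos_iff, sub_ne_zero]
    intro heq
    have h12 : p₀.2 = p₀.1 := hinj hp₀K.1.2 hp₀K.1.1 heq
    have h2 : p₀.1 + δ' ≤ p₀.2 := hp₀K.2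
    rw [h12] at h2
    linarith
  -- combine
  refine ⟨max (max (2*M/m) (M/ε)) 1, le_max_right _ _, ?_⟩
  intro s hs t ht hst
  have hCnn : (0:ℝ) ≤ max (max (2*M/m) (M/ε)) 1 := le_trans zero_le_one (le_max_right _ _)
  by_cases hcase : t - s ≤ δ'
  · have hchord := key s hs t ht hst hcase
    have h1 : (∫ u in s..t, ‖γ' u‖) ≤ M * (t - s) := harc s hs t ht hst
    have h2 : M * (t - s) = (2*M/m) * ((t - s) * (m/2)) := by
      field_simp
    calc (∫ u in s..t, ‖γ' u‖) ≤ M * (t - s) := h1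
      _ = (2*M/m) * ((t - s) * (m/2)) := h2
      _ ≤ (2*M/m) * ‖γ t - γ s‖ :=
          mul_le_mul_of_nonneg_left hchord (by positivity)
      _ ≤ max (max (2*M/m) (M/ε)) 1 * ‖γ t - γ s‖ :=
          mul_le_mul_of_nonneg_right (le_trans (le_max_left _ _) (le_max_left _ _)) (norm_nonneg _)
  · push_neg at hcase
    have hmemK : (s, t) ∈ K := ⟨⟨hs, ht⟩, by simp only [Set.mem_setOf_eq]; linarith⟩
    have hchord : ε ≤ ‖γ t - γ s‖ := hp₀ (s, t) hmemK
    calc (∫ u in s..t, ‖γ' u‖) ≤ M * (t - s) := harc s hs t ht hst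
      _ ≤ M * 1 := mul_le_mul_of_nonneg_left (by linarith [hs.1, ht.2]) hM0.le
      _ = (M/ε) * ε := by field_simp
      _ ≤ (M/ε) * ‖γ t - γ s‖ := mul_le_mul_of_nonneg_left hchord (by positivity)
      _ ≤ max (max (2*M/m) (M/ε)) 1 * ‖γ t - γ s‖ :=
          mul_le_mul_of_nonneg_right (le_trans (le_max_right _ _) (le_max_left _ _)) (norm_nonneg _)
end
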